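/- arXiv:2210.16600 — 4 statements merged into one kernel-verified Lean document; each statement's English description precedes it below -/
import Mathlib

section
/- There exists a constant C > 0 such that for all smooth compactly supported functions f, g, h on ℝ³, ∫_{ℝ³} |f g h| dx ≤ C ‖f‖_{L²}^{1/2} ‖∂₁f‖_{L²}^{1/2} ‖g‖_{L²}^{1/2} ‖∂₂g‖_{L²}^{1/2} ‖h‖_{L²}^{1/2} ‖∂₃h‖_{L²}^{1/2}. -/
open MeasureTheory

open Function ENNReal Finset

local notation "μ3" => (fun _ : Fin 3 => (volume : Measure ℝ))

/-- Partial derivative in the `i`-th coordinate direction on `ℝ³`. -/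
noncomputable def pd (i : Fin 3) (f : (Fin 3 → ℝ) → ℝ) : (Fin 3 → ℝ) → ℝ :=
  fun x => fderiv ℝ f x (Pi.single i 1)

/-- The `L²` norm over `ℝ³`. -/
noncomputable def L2 (f : (Fin 3 → ℝ) → ℝ) : ℝ :=
  (∫ x : Fin 3 → ℝ, (f x) ^ 2) ^ ((1:ℝ)/2)

private lemma mrpow {α} [MeasurableSpace α] {f : α → ℝ≥0∞} (hf : Measurable f) (q : ℝ) :
    Measurable fun x => f x ^ q :=
  (ENNReal.continuous_rpow_const.measurable).comp hf

private lemma half_sq (y : ℝ≥0∞) : (y ^ (2⁻¹ : ℝ)) ^ (2 : ℝ) = y := by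
  rw [← ENNReal.rpow_mul]; norm_num

private lemma half_sq' (y : ℝ≥0∞) : (y ^ (2:ℝ)) ^ (2⁻¹ : ℝ) = y := by
  rw [← ENNReal.rpow_mul]; norm_num

private lemma ofReal_abs_eq (r : ℝ) :
    ENNReal.ofReal |r| = (ENNReal.ofReal (r ^ 2)) ^ (2⁻¹ : ℝ) := by
  rw [show r ^ 2 = |r| ^ (2:ℝ) by
    rw [show ((2:ℝ)) = ((2:ℕ):ℝ) by norm_num, Real.rpow_natCast, sq_abs],
    ← ENNReal.ofReal_rpow_of_nonneg (abs_nonneg r) (by norm_num), half_sq']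

private lemma cs_step {α} [MeasurableSpace α] (μ : Measure α) {b c : α → ℝ≥0∞}
    (hb : Measurable b) (hc : Measurable c) :
    ∫⁻ t, b t ^ (2⁻¹ : ℝ) * c t ^ (2⁻¹ : ℝ) ∂μ ≤
      (∫⁻ t, b t ∂μ) ^ (2⁻¹ : ℝ) * (∫⁻ t, c t ∂μ) ^ (2⁻¹ : ℝ) := by
  have hconj : Real.HolderConjugate 2 2 := Real.HolderConjugate.two_two
  have h := ENNReal.lintegral_mul_le_Lp_mul_Lq μ hconj
    (f := fun t => b t ^ (2⁻¹ : ℝ)) (g := fun t => c t ^ (2⁻¹ : ℝ))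
    ((mrpow hb _).aemeasurable) ((mrpow hc _).aemeasurable)
  simp only [Pi.mul_apply] at h
  calc ∫⁻ t, b t ^ (2⁻¹ : ℝ) * c t ^ (2⁻¹ : ℝ) ∂μ
      ≤ (∫⁻ a, (b a ^ (2⁻¹:ℝ)) ^ (2:ℝ) ∂μ) ^ ((1:ℝ)/2) *
        (∫⁻ a, (c a ^ (2⁻¹:ℝ)) ^ (2:ℝ) ∂μ) ^ ((1:ℝ)/2) := h
    _ = _ := by simp_rw [half_sq, one_div]

private lemma cs_pair (μ : Measure (Fin 3 → ℝ)) {u v : (Fin 3 → ℝ) → ℝ}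
    (hu : Measurable u) (hv : Measurable v) :
    ∫⁻ x, ENNReal.ofReal |u x * v x| ∂μ ≤
      (∫⁻ x, ENNReal.ofReal (u x ^ 2) ∂μ) ^ (2⁻¹:ℝ) *
      (∫⁻ x, ENNReal.ofReal (v x ^ 2) ∂μ) ^ (2⁻¹:ℝ) := by
  have e : ∀ x, ENNReal.ofReal |u x * v x| =
      (ENNReal.ofReal (u x ^ 2)) ^ (2⁻¹:ℝ) * (ENNReal.ofReal (v x ^ 2)) ^ (2⁻¹:ℝ) := by
    intro x
    rw [abs_mul, ENNReal.ofReal_mul (abs_nonneg _), ofReal_abs_eq, ofReal_abs_eq]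
  simp_rw [e]
  exact cs_step μ (ENNReal.measurable_ofReal.comp (hu.pow_const 2))
    (ENNReal.measurable_ofReal.comp (hv.pow_const 2))

private lemma quarter (a b : ℝ≥0∞) :
    (a ^ (2⁻¹:ℝ) * b ^ (2⁻¹:ℝ)) ^ (2⁻¹:ℝ) = a ^ (4⁻¹:ℝ) * b ^ (4⁻¹:ℝ) := by
  rw [ENNReal.mul_rpow_of_nonneg _ _ (by norm_num), ← ENNReal.rpow_mul, ← ENNReal.rpow_mul]
  norm_num

section prelim
variable {f : (Fin 3 → ℝ) → ℝ} {i : Fin 3}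

private lemma pd_cont (hf : ContDiff ℝ (⊤ : ℕ∞) f) : Continuous (pd i f) :=
  (hf.continuous_fderiv (by simp)).clm_apply continuous_const

/-- 1D Agmon-type inequality along coordinate `i`. -/
private lemma sq_le_two_lintegral (hf : ContDiff ℝ (⊤ : ℕ∞) f) (hs : HasCompactSupport f)
    (i : Fin 3) (x : Fin 3 → ℝ) :
    ENNReal.ofReal (f x ^ 2) ≤
      2 * ∫⁻ t : ℝ, ENNReal.ofReal |f (update x i t) * pd i f (update x i t)| := by
  set u : ℝ → ℝ := fun t => f (update x i t) with hu_def
  set v : ℝ → ℝ := fun t => pd i f (update x i t) with hv_def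
  have hu_cont : Continuous u := hf.continuous.comp (contDiff_update (𝕜 := ℝ) 1 x i).continuous
  have hv_cont : Continuous v := (pd_cont hf).comp (contDiff_update (𝕜 := ℝ) 1 x i).continuous
  have hu_supp : HasCompactSupport u := by
    refine HasCompactSupport.intro (K := (fun p : Fin 3 → ℝ => p i) '' tsupport f)
      (hs.image (continuous_apply i)) (fun t ht => ?_)
    by_contra h
    exact ht ⟨update x i t, subset_tsupport f h, by simp⟩
  have hderiv : ∀ t : ℝ, HasDerivAt u (v t) t := fun t =>
    ((hf.differentiable (by simp)).differentiableAt.hasFDerivAt).comp_hasDerivAt t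
      (hasDerivAt_update x i t)
  have huv_cont : Continuous fun t => 2 * |u t * v t| :=
    (continuous_const.mul ((hu_cont.mul hv_cont).abs))
  have huv_supp : HasCompactSupport fun t => 2 * |u t * v t| := by
    apply hu_supp.mono
    intro t ht
    simp only [Function.mem_support] at ht ⊢
    intro h; apply ht; simp [h]
  have huv_int : Integrable (fun t => 2 * |u t * v t|) :=
    huv_cont.integrable_of_hasCompactSupport huv_supp
  obtain ⟨R, hR⟩ := (hu_supp.isCompact).isBounded.subset_closedBall 0
  set a : ℝ := min (x i) (-(|R| + 1)) with ha_def
  have hua : u a = 0 := by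
    apply image_eq_zero_of_notMem_tsupport
    intro hmem
    have := hR hmem
    simp only [Metric.mem_closedBall, Real.dist_eq, sub_zero] at this
    have h1 : a ≤ -(|R| + 1) := min_le_right _ _
    have h2 : |a| ≤ R := this
    nlinarith [neg_abs_le a, le_abs_self R]
  have hax : a ≤ x i := min_le_left _ _
  have hftc : u (x i) ^ 2 - u a ^ 2 = ∫ t in a..(x i), 2 * u t * v t := by
    rw [← intervalIntegral.integral_eq_sub_of_hasDerivAt
      (f := fun t => u t ^ 2) (f' := fun t => 2 * u t * v t)
      (fun t _ => by simpa [mul_comm, mul_assoc, pow_two] using (hderiv t).fun_pow 2)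
      (((continuous_const.mul hu_cont).mul hv_cont).intervalIntegrable _ _)]
  have hx_eq : u (x i) = f x := by rw [hu_def]; simp [Function.update_eq_self]
  have step1 : f x ^ 2 ≤ ∫ t in a..(x i), 2 * |u t * v t| := by
    rw [← hx_eq]
    calc u (x i) ^ 2 = u (x i) ^ 2 - u a ^ 2 := by rw [hua]; ring
    _ = ∫ t in a..(x i), 2 * u t * v t := hftc
    _ ≤ ∫ t in a..(x i), 2 * |u t * v t| := by
        apply intervalIntegral.integral_mono_on hax
          (((continuous_const.mul hu_cont).mul hv_cont).intervalIntegrable _ _)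
          (huv_cont.intervalIntegrable _ _)
        intro t _
        rw [mul_assoc]
        exact mul_le_mul_of_nonneg_left (le_abs_self _) (by norm_num)
  have step2 : (∫ t in a..(x i), 2 * |u t * v t|) ≤ ∫ t : ℝ, 2 * |u t * v t| := by
    rw [intervalIntegral.integral_of_le hax]
    exact setIntegral_le_integral huv_int (Filter.Eventually.of_forall fun t => by positivity)
  calc ENNReal.ofReal (f x ^ 2) ≤ ENNReal.ofReal (∫ t : ℝ, 2 * |u t * v t|) :=
        ENNReal.ofReal_le_ofReal (step1.trans step2)
  _ = ∫⁻ t : ℝ, ENNReal.ofReal (2 * |u t * v t|) :=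
        ofReal_integral_eq_lintegral_ofReal huv_int
          (Filter.Eventually.of_forall fun t => by positivity)
  _ = 2 * ∫⁻ t : ℝ, ENNReal.ofReal |u t * v t| := by
        simp_rw [ENNReal.ofReal_mul (by norm_num : (0:ℝ) ≤ 2)]
        rw [lintegral_const_mul' _ _ (by norm_num)]
        norm_num

private lemma sq_int (hf : ContDiff ℝ (⊤ : ℕ∞) f) (hs : HasCompactSupport f) :
    ∫⁻ x, ENNReal.ofReal (f x ^ 2) ∂(Measure.pi μ3) ≠ ⊤ := by
  have hint : Integrable (fun x => f x ^ 2) (Measure.pi μ3) := by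
    rw [← MeasureTheory.volume_pi]
    exact (hf.continuous.pow 2).integrable_of_hasCompactSupport
      ((hs.mul_left (f := f)).mono (by
        intro x hx
        simp only [Function.mem_support] at hx ⊢
        intro hc; exact hx (by rw [pow_two]; exact hc)))
  have := (hasFiniteIntegral_iff_ofReal
    (Filter.Eventually.of_forall fun x => sq_nonneg (f x))).mp hint.hasFiniteIntegral
  exact this.ne

private lemma int_sq_eq (hf : ContDiff ℝ (⊤ : ℕ∞) f) :
    L2 f = ((∫⁻ x, ENNReal.ofReal (f x ^ 2) ∂(Measure.pi μ3)).toReal) ^ ((1:ℝ)/2) := by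
  rw [L2, MeasureTheory.volume_pi, integral_eq_lintegral_of_nonneg_ae
    (Filter.Eventually.of_forall fun x => sq_nonneg (f x))
    ((hf.continuous.pow 2).aestronglyMeasurable)]

end prelim

private lemma loomis_whitney (φ₀ φ₁ φ₂ : (Fin 3 → ℝ) → ℝ≥0∞)
    (h₀ : Measurable φ₀) (h₁ : Measurable φ₁) (h₂ : Measurable φ₂) :
    ∫⁻ x : Fin 3 → ℝ,
        ((∫⋯∫⁻_{0}, φ₀ ∂μ3) x) ^ (2⁻¹ : ℝ) *
        ((∫⋯∫⁻_{1}, φ₁ ∂μ3) x) ^ (2⁻¹ : ℝ) *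
        ((∫⋯∫⁻_{2}, φ₂ ∂μ3) x) ^ (2⁻¹ : ℝ) ∂(Measure.pi μ3) ≤
      (∫⁻ x, φ₀ x ∂(Measure.pi μ3)) ^ (2⁻¹ : ℝ) *
      (∫⁻ x, φ₁ x ∂(Measure.pi μ3)) ^ (2⁻¹ : ℝ) *
      (∫⁻ x, φ₂ x ∂(Measure.pi μ3)) ^ (2⁻¹ : ℝ) := by
  have m0 : ∀ s : Finset (Fin 3), Measurable (∫⋯∫⁻_s, φ₀ ∂μ3) :=
    fun s => h₀.lmarginal (μ := μ3) (s := s)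
  have m1 : ∀ s : Finset (Fin 3), Measurable (∫⋯∫⁻_s, φ₁ ∂μ3) :=
    fun s => h₁.lmarginal (μ := μ3) (s := s)
  have m2 : ∀ s : Finset (Fin 3), Measurable (∫⋯∫⁻_s, φ₂ ∂μ3) :=
    fun s => h₂.lmarginal (μ := μ3) (s := s)
  set G : (Fin 3 → ℝ) → ℝ≥0∞ := fun x =>
    ((∫⋯∫⁻_{0}, φ₀ ∂μ3) x) ^ (2⁻¹:ℝ) * ((∫⋯∫⁻_{1}, φ₁ ∂μ3) x) ^ (2⁻¹:ℝ) *
      ((∫⋯∫⁻_{2}, φ₂ ∂μ3) x) ^ (2⁻¹:ℝ) with hG_def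
  set G₁ : (Fin 3 → ℝ) → ℝ≥0∞ := fun x =>
    ((∫⋯∫⁻_{0}, φ₀ ∂μ3) x) ^ (2⁻¹:ℝ) * ((∫⋯∫⁻_insert 0 {1}, φ₁ ∂μ3) x) ^ (2⁻¹:ℝ) *
      ((∫⋯∫⁻_insert 0 {2}, φ₂ ∂μ3) x) ^ (2⁻¹:ℝ) with hG₁_def
  set G₂ : (Fin 3 → ℝ) → ℝ≥0∞ := fun x =>
    ((∫⋯∫⁻_insert 1 {0}, φ₀ ∂μ3) x) ^ (2⁻¹:ℝ) *
      ((∫⋯∫⁻_insert 0 {1}, φ₁ ∂μ3) x) ^ (2⁻¹:ℝ) *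
      ((∫⋯∫⁻_insert 1 (insert 0 {2}), φ₂ ∂μ3) x) ^ (2⁻¹:ℝ) with hG₂_def
  set G₃ : (Fin 3 → ℝ) → ℝ≥0∞ := fun x =>
    ((∫⋯∫⁻_insert 2 (insert 1 {0}), φ₀ ∂μ3) x) ^ (2⁻¹:ℝ) *
      ((∫⋯∫⁻_insert 2 (insert 0 {1}), φ₁ ∂μ3) x) ^ (2⁻¹:ℝ) *
      ((∫⋯∫⁻_insert 1 (insert 0 {2}), φ₂ ∂μ3) x) ^ (2⁻¹:ℝ) with hG₃_def
  have hG : Measurable G := ((mrpow (m0 _) _).mul (mrpow (m1 _) _)).mul (mrpow (m2 _) _)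
  have hG₁ : Measurable G₁ := ((mrpow (m0 _) _).mul (mrpow (m1 _) _)).mul (mrpow (m2 _) _)
  have hG₂ : Measurable G₂ := ((mrpow (m0 _) _).mul (mrpow (m1 _) _)).mul (mrpow (m2 _) _)
  have step1 : (fun x => ∫⁻ t, G (update x 0 t)) ≤ G₁ := by
    intro x
    have hcongr : ∀ t : ℝ, G (update x 0 t) =
        ((∫⋯∫⁻_{0}, φ₀ ∂μ3) x) ^ (2⁻¹:ℝ) *
          (((∫⋯∫⁻_{1}, φ₁ ∂μ3) (update x 0 t)) ^ (2⁻¹:ℝ) *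
           ((∫⋯∫⁻_{2}, φ₂ ∂μ3) (update x 0 t)) ^ (2⁻¹:ℝ)) := by
      intro t
      simp only [hG_def,
        lmarginal_update_of_mem μ3 (by decide : (0:Fin 3) ∈ ({0} : Finset (Fin 3)))]
      ring
    calc (∫⁻ t, G (update x 0 t))
        = ((∫⋯∫⁻_{0}, φ₀ ∂μ3) x) ^ (2⁻¹:ℝ) *
            ∫⁻ t, ((∫⋯∫⁻_{1}, φ₁ ∂μ3) (update x 0 t)) ^ (2⁻¹:ℝ) *
              ((∫⋯∫⁻_{2}, φ₂ ∂μ3) (update x 0 t)) ^ (2⁻¹:ℝ) := by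
          simp_rw [hcongr]
          exact lintegral_const_mul _
            ((mrpow ((m1 _).comp (measurable_update x)) _).mul
              (mrpow ((m2 _).comp (measurable_update x)) _))
      _ ≤ ((∫⋯∫⁻_{0}, φ₀ ∂μ3) x) ^ (2⁻¹:ℝ) *
            ((∫⁻ t, (∫⋯∫⁻_{1}, φ₁ ∂μ3) (update x 0 t)) ^ (2⁻¹:ℝ) *
             (∫⁻ t, (∫⋯∫⁻_{2}, φ₂ ∂μ3) (update x 0 t)) ^ (2⁻¹:ℝ)) := by
          gcongr
          exact cs_step volume ((m1 _).comp (measurable_update x)) ((m2 _).comp (measurable_update x))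
      _ = G₁ x := by
          simp only [hG₁_def,
            lmarginal_insert _ h₁ (by decide : (0:Fin 3) ∉ ({1} : Finset (Fin 3))),
            lmarginal_insert _ h₂ (by decide : (0:Fin 3) ∉ ({2} : Finset (Fin 3)))]
          ring
  have step2 : (fun x => ∫⁻ t, G₁ (update x 1 t)) ≤ G₂ := by
    intro x
    have hcongr : ∀ t : ℝ, G₁ (update x 1 t) =
        ((∫⋯∫⁻_insert 0 {1}, φ₁ ∂μ3) x) ^ (2⁻¹:ℝ) *
          (((∫⋯∫⁻_{0}, φ₀ ∂μ3) (update x 1 t)) ^ (2⁻¹:ℝ) *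
           ((∫⋯∫⁻_insert 0 {2}, φ₂ ∂μ3) (update x 1 t)) ^ (2⁻¹:ℝ)) := by
      intro t
      simp only [hG₁_def,
        lmarginal_update_of_mem μ3 (by decide : (1:Fin 3) ∈ insert 0 ({1} : Finset (Fin 3)))]
      ring
    calc (∫⁻ t, G₁ (update x 1 t))
        = ((∫⋯∫⁻_insert 0 {1}, φ₁ ∂μ3) x) ^ (2⁻¹:ℝ) *
            ∫⁻ t, ((∫⋯∫⁻_{0}, φ₀ ∂μ3) (update x 1 t)) ^ (2⁻¹:ℝ) *
              ((∫⋯∫⁻_insert 0 {2}, φ₂ ∂μ3) (update x 1 t)) ^ (2⁻¹:ℝ) := by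
          simp_rw [hcongr]
          exact lintegral_const_mul _
            ((mrpow ((m0 _).comp (measurable_update x)) _).mul
              (mrpow ((m2 _).comp (measurable_update x)) _))
      _ ≤ ((∫⋯∫⁻_insert 0 {1}, φ₁ ∂μ3) x) ^ (2⁻¹:ℝ) *
            ((∫⁻ t, (∫⋯∫⁻_{0}, φ₀ ∂μ3) (update x 1 t)) ^ (2⁻¹:ℝ) *
             (∫⁻ t, (∫⋯∫⁻_insert 0 {2}, φ₂ ∂μ3) (update x 1 t)) ^ (2⁻¹:ℝ)) := by
          gcongr
          exact cs_step volume ((m0 _).comp (measurable_update x)) ((m2 _).comp (measurable_update x))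
      _ = G₂ x := by
          simp only [hG₂_def,
            lmarginal_insert _ h₀ (by decide : (1:Fin 3) ∉ ({0} : Finset (Fin 3))),
            lmarginal_insert _ h₂ (by decide : (1:Fin 3) ∉ insert 0 ({2} : Finset (Fin 3)))]
          ring
  have step3 : (fun x => ∫⁻ t, G₂ (update x 2 t)) ≤ G₃ := by
    intro x
    have hcongr : ∀ t : ℝ, G₂ (update x 2 t) =
        ((∫⋯∫⁻_insert 1 (insert 0 {2}), φ₂ ∂μ3) x) ^ (2⁻¹:ℝ) *
          (((∫⋯∫⁻_insert 1 {0}, φ₀ ∂μ3) (update x 2 t)) ^ (2⁻¹:ℝ) *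
           ((∫⋯∫⁻_insert 0 {1}, φ₁ ∂μ3) (update x 2 t)) ^ (2⁻¹:ℝ)) := by
      intro t
      simp only [hG₂_def,
        lmarginal_update_of_mem μ3
          (by decide : (2:Fin 3) ∈ insert 1 (insert 0 ({2} : Finset (Fin 3))))]
      ring
    calc (∫⁻ t, G₂ (update x 2 t))
        = ((∫⋯∫⁻_insert 1 (insert 0 {2}), φ₂ ∂μ3) x) ^ (2⁻¹:ℝ) *
            ∫⁻ t, ((∫⋯∫⁻_insert 1 {0}, φ₀ ∂μ3) (update x 2 t)) ^ (2⁻¹:ℝ) *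
              ((∫⋯∫⁻_insert 0 {1}, φ₁ ∂μ3) (update x 2 t)) ^ (2⁻¹:ℝ) := by
          simp_rw [hcongr]
          exact lintegral_const_mul _
            ((mrpow ((m0 _).comp (measurable_update x)) _).mul
              (mrpow ((m1 _).comp (measurable_update x)) _))
      _ ≤ ((∫⋯∫⁻_insert 1 (insert 0 {2}), φ₂ ∂μ3) x) ^ (2⁻¹:ℝ) *
            ((∫⁻ t, (∫⋯∫⁻_insert 1 {0}, φ₀ ∂μ3) (update x 2 t)) ^ (2⁻¹:ℝ) *
             (∫⁻ t, (∫⋯∫⁻_insert 0 {1}, φ₁ ∂μ3) (update x 2 t)) ^ (2⁻¹:ℝ)) := by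
          gcongr
          exact cs_step volume ((m0 _).comp (measurable_update x)) ((m1 _).comp (measurable_update x))
      _ = G₃ x := by
          simp only [hG₃_def,
            lmarginal_insert _ h₀ (by decide : (2:Fin 3) ∉ insert 1 ({0} : Finset (Fin 3))),
            lmarginal_insert _ h₁ (by decide : (2:Fin 3) ∉ insert 0 ({1} : Finset (Fin 3)))]
          ring
  set x0 : Fin 3 → ℝ := fun _ => 0 with hx0
  calc ∫⁻ x, G x ∂(Measure.pi μ3) = (∫⋯∫⁻_Finset.univ, G ∂μ3) x0 :=
        lintegral_eq_lmarginal_univ x0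
    _ = (∫⋯∫⁻_insert 1 {2}, (fun x => ∫⁻ t, G (update x 0 t)) ∂μ3) x0 := by
        rw [show (Finset.univ : Finset (Fin 3)) = insert 0 (insert 1 {2}) by decide,
          lmarginal_insert' _ hG (by decide : (0:Fin 3) ∉ insert 1 ({2} : Finset (Fin 3)))]
    _ ≤ (∫⋯∫⁻_insert 1 {2}, G₁ ∂μ3) x0 := lmarginal_mono step1 x0
    _ = (∫⋯∫⁻_{2}, (fun x => ∫⁻ t, G₁ (update x 1 t)) ∂μ3) x0 := by
        rw [lmarginal_insert' _ hG₁ (by decide : (1:Fin 3) ∉ ({2} : Finset (Fin 3)))]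
    _ ≤ (∫⋯∫⁻_{2}, G₂ ∂μ3) x0 := lmarginal_mono step2 x0
    _ = (∫⋯∫⁻_(∅ : Finset (Fin 3)), (fun x => ∫⁻ t, G₂ (update x 2 t)) ∂μ3) x0 := by
        rw [show ({2} : Finset (Fin 3)) = insert 2 ∅ from rfl,
          lmarginal_insert' _ hG₂ (by decide : (2:Fin 3) ∉ (∅ : Finset (Fin 3)))]
    _ ≤ (∫⋯∫⁻_(∅ : Finset (Fin 3)), G₃ ∂μ3) x0 := lmarginal_mono step3 x0
    _ = G₃ x0 := by rw [lmarginal_empty]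
    _ = (∫⁻ x, φ₀ x ∂(Measure.pi μ3)) ^ (2⁻¹ : ℝ) *
        (∫⁻ x, φ₁ x ∂(Measure.pi μ3)) ^ (2⁻¹ : ℝ) *
        (∫⁻ x, φ₂ x ∂(Measure.pi μ3)) ^ (2⁻¹ : ℝ) := by
        simp only [hG₃_def,
          show insert 2 (insert 1 ({0} : Finset (Fin 3))) = Finset.univ by decide,
          show insert 2 (insert 0 ({1} : Finset (Fin 3))) = Finset.univ by decide,
          show insert 1 (insert 0 ({2} : Finset (Fin 3))) = Finset.univ by decide,
          lmarginal_univ]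

/-- Anisotropic triple-product inequality:
`∫ |fgh| ≤ C ‖f‖^{1/2}‖∂₁f‖^{1/2} ‖g‖^{1/2}‖∂₂g‖^{1/2} ‖h‖^{1/2}‖∂₃h‖^{1/2}`. -/
theorem anisotropic_triple_product :
    ∃ C > 0, ∀ f g h : (Fin 3 → ℝ) → ℝ,
      ContDiff ℝ (⊤ : ℕ∞) f → HasCompactSupport f →
      ContDiff ℝ (⊤ : ℕ∞) g → HasCompactSupport g →
      ContDiff ℝ (⊤ : ℕ∞) h → HasCompactSupport h →
      (∫ x : Fin 3 → ℝ, |f x * g x * h x|) ≤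
        C * L2 f ^ ((1:ℝ)/2) * L2 (pd 0 f) ^ ((1:ℝ)/2) *
          L2 g ^ ((1:ℝ)/2) * L2 (pd 1 g) ^ ((1:ℝ)/2) *
          L2 h ^ ((1:ℝ)/2) * L2 (pd 2 h) ^ ((1:ℝ)/2) := by
  refine ⟨8, by norm_num, ?_⟩
  intro f g h hf hfs hg hgs hh hhs
  have htwo : (2:ℝ≥0∞) ^ (2⁻¹:ℝ) ≤ 2 := by
    calc (2:ℝ≥0∞) ^ (2⁻¹:ℝ) ≤ (2:ℝ≥0∞) ^ (1:ℝ) :=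
          ENNReal.rpow_le_rpow_of_exponent_le (by norm_num) (by norm_num)
      _ = 2 := ENNReal.rpow_one 2
  set φf : (Fin 3 → ℝ) → ℝ≥0∞ := fun x => ENNReal.ofReal |f x * pd 0 f x| with hφf
  set φg : (Fin 3 → ℝ) → ℝ≥0∞ := fun x => ENNReal.ofReal |g x * pd 1 g x| with hφg
  set φh : (Fin 3 → ℝ) → ℝ≥0∞ := fun x => ENNReal.ofReal |h x * pd 2 h x| with hφh
  have mφf : Measurable φf :=
    ENNReal.measurable_ofReal.comp ((hf.continuous.mul (pd_cont hf)).abs).measurable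
  have mφg : Measurable φg :=
    ENNReal.measurable_ofReal.comp ((hg.continuous.mul (pd_cont hg)).abs).measurable
  have mφh : Measurable φh :=
    ENNReal.measurable_ofReal.comp ((hh.continuous.mul (pd_cont hh)).abs).measurable
  -- pointwise bound
  have hAf : ∀ x, ENNReal.ofReal (f x ^ 2) ≤ 2 * (∫⋯∫⁻_{0}, φf ∂μ3) x := by
    intro x; rw [lmarginal_singleton]; exact sq_le_two_lintegral hf hfs 0 x
  have hAg : ∀ x, ENNReal.ofReal (g x ^ 2) ≤ 2 * (∫⋯∫⁻_{1}, φg ∂μ3) x := by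
    intro x; rw [lmarginal_singleton]; exact sq_le_two_lintegral hg hgs 1 x
  have hAh : ∀ x, ENNReal.ofReal (h x ^ 2) ≤ 2 * (∫⋯∫⁻_{2}, φh ∂μ3) x := by
    intro x; rw [lmarginal_singleton]; exact sq_le_two_lintegral hh hhs 2 x
  have key_pt : ∀ (F : (Fin 3 → ℝ) → ℝ) (A : ℝ≥0∞) (x : Fin 3 → ℝ),
      ENNReal.ofReal (F x ^ 2) ≤ 2 * A → ENNReal.ofReal |F x| ≤ 2 * A ^ (2⁻¹:ℝ) := by
    intro F A x hFA
    rw [ofReal_abs_eq]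
    calc (ENNReal.ofReal (F x ^ 2)) ^ (2⁻¹:ℝ) ≤ (2 * A) ^ (2⁻¹:ℝ) :=
          ENNReal.rpow_le_rpow hFA (by norm_num)
      _ = (2:ℝ≥0∞) ^ (2⁻¹:ℝ) * A ^ (2⁻¹:ℝ) := ENNReal.mul_rpow_of_nonneg _ _ (by norm_num)
      _ ≤ 2 * A ^ (2⁻¹:ℝ) := mul_le_mul_left htwo _
  have hpt : ∀ x, ENNReal.ofReal |f x * g x * h x| ≤
      8 * (((∫⋯∫⁻_{0}, φf ∂μ3) x) ^ (2⁻¹:ℝ) * ((∫⋯∫⁻_{1}, φg ∂μ3) x) ^ (2⁻¹:ℝ) *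
        ((∫⋯∫⁻_{2}, φh ∂μ3) x) ^ (2⁻¹:ℝ)) := by
    intro x
    have e1 : ENNReal.ofReal |f x * g x * h x|
        = ENNReal.ofReal |f x| * ENNReal.ofReal |g x| * ENNReal.ofReal |h x| := by
      rw [abs_mul, abs_mul, ENNReal.ofReal_mul (by positivity),
        ENNReal.ofReal_mul (abs_nonneg _)]
    rw [e1]
    calc ENNReal.ofReal |f x| * ENNReal.ofReal |g x| * ENNReal.ofReal |h x|
        ≤ (2 * ((∫⋯∫⁻_{0}, φf ∂μ3) x) ^ (2⁻¹:ℝ)) * (2 * ((∫⋯∫⁻_{1}, φg ∂μ3) x) ^ (2⁻¹:ℝ)) *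
            (2 * ((∫⋯∫⁻_{2}, φh ∂μ3) x) ^ (2⁻¹:ℝ)) :=
          mul_le_mul' (mul_le_mul' (key_pt f _ x (hAf x)) (key_pt g _ x (hAg x)))
            (key_pt h _ x (hAh x))
      _ = 8 * (((∫⋯∫⁻_{0}, φf ∂μ3) x) ^ (2⁻¹:ℝ) * ((∫⋯∫⁻_{1}, φg ∂μ3) x) ^ (2⁻¹:ℝ) *
            ((∫⋯∫⁻_{2}, φh ∂μ3) x) ^ (2⁻¹:ℝ)) := by ring
  -- abbreviations for the six squared integrals
  set If := ∫⁻ x, ENNReal.ofReal (f x ^ 2) ∂(Measure.pi μ3) with hIf_def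
  set Ipf := ∫⁻ x, ENNReal.ofReal (pd 0 f x ^ 2) ∂(Measure.pi μ3) with hIpf_def
  set Ig := ∫⁻ x, ENNReal.ofReal (g x ^ 2) ∂(Measure.pi μ3) with hIg_def
  set Ipg := ∫⁻ x, ENNReal.ofReal (pd 1 g x ^ 2) ∂(Measure.pi μ3) with hIpg_def
  set Ih := ∫⁻ x, ENNReal.ofReal (h x ^ 2) ∂(Measure.pi μ3) with hIh_def
  set Iph := ∫⁻ x, ENNReal.ofReal (pd 2 h x ^ 2) ∂(Measure.pi μ3) with hIph_def
  have key : (∫⁻ x, ENNReal.ofReal |f x * g x * h x| ∂(Measure.pi μ3)) ≤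
      8 * (If ^ (4⁻¹:ℝ) * Ipf ^ (4⁻¹:ℝ) * (Ig ^ (4⁻¹:ℝ) * Ipg ^ (4⁻¹:ℝ)) *
        (Ih ^ (4⁻¹:ℝ) * Iph ^ (4⁻¹:ℝ))) := by
    calc (∫⁻ x, ENNReal.ofReal |f x * g x * h x| ∂(Measure.pi μ3))
        ≤ ∫⁻ x, 8 * (((∫⋯∫⁻_{0}, φf ∂μ3) x) ^ (2⁻¹:ℝ) * ((∫⋯∫⁻_{1}, φg ∂μ3) x) ^ (2⁻¹:ℝ) *
            ((∫⋯∫⁻_{2}, φh ∂μ3) x) ^ (2⁻¹:ℝ)) ∂(Measure.pi μ3) := lintegral_mono hpt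
      _ = 8 * ∫⁻ x, ((∫⋯∫⁻_{0}, φf ∂μ3) x) ^ (2⁻¹:ℝ) * ((∫⋯∫⁻_{1}, φg ∂μ3) x) ^ (2⁻¹:ℝ) *
            ((∫⋯∫⁻_{2}, φh ∂μ3) x) ^ (2⁻¹:ℝ) ∂(Measure.pi μ3) :=
          lintegral_const_mul' _ _ (by norm_num)
      _ ≤ 8 * ((∫⁻ x, φf x ∂(Measure.pi μ3)) ^ (2⁻¹ : ℝ) *
            (∫⁻ x, φg x ∂(Measure.pi μ3)) ^ (2⁻¹ : ℝ) *
            (∫⁻ x, φh x ∂(Measure.pi μ3)) ^ (2⁻¹ : ℝ)) :=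
          mul_le_mul_right (loomis_whitney φf φg φh mφf mφg mφh) _
      _ ≤ 8 * ((If ^ (2⁻¹:ℝ) * Ipf ^ (2⁻¹:ℝ)) ^ (2⁻¹:ℝ) *
            (Ig ^ (2⁻¹:ℝ) * Ipg ^ (2⁻¹:ℝ)) ^ (2⁻¹:ℝ) *
            (Ih ^ (2⁻¹:ℝ) * Iph ^ (2⁻¹:ℝ)) ^ (2⁻¹:ℝ)) := by
          gcongr 8 * (?_ * ?_ * ?_)
          · exact ENNReal.rpow_le_rpow
              (cs_pair _ hf.continuous.measurable (pd_cont hf).measurable) (by norm_num)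
          · exact ENNReal.rpow_le_rpow
              (cs_pair _ hg.continuous.measurable (pd_cont hg).measurable) (by norm_num)
          · exact ENNReal.rpow_le_rpow
              (cs_pair _ hh.continuous.measurable (pd_cont hh).measurable) (by norm_num)
      _ = 8 * (If ^ (4⁻¹:ℝ) * Ipf ^ (4⁻¹:ℝ) * (Ig ^ (4⁻¹:ℝ) * Ipg ^ (4⁻¹:ℝ)) *
            (Ih ^ (4⁻¹:ℝ) * Iph ^ (4⁻¹:ℝ))) := by
          rw [quarter, quarter, quarter]
  -- finiteness
  have hfin : ∀ (F : (Fin 3 → ℝ) → ℝ), ContDiff ℝ (⊤ : ℕ∞) F → HasCompactSupport F →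
      ∫⁻ x, ENNReal.ofReal (F x ^ 2) ∂(Measure.pi μ3) ≠ ⊤ := fun F hF hFs => sq_int hF hFs
  have hpd_smooth : ∀ (F : (Fin 3 → ℝ) → ℝ) (i : Fin 3), ContDiff ℝ (⊤ : ℕ∞) F →
      ContDiff ℝ (⊤ : ℕ∞) (pd i F) := by
    intro F i hF
    exact (hF.fderiv_right (by simp)).clm_apply contDiff_const
  have hpd_supp : ∀ (F : (Fin 3 → ℝ) → ℝ) (i : Fin 3), HasCompactSupport F →
      HasCompactSupport (pd i F) := by
    intro F i hFs
    exact hFs.fderiv_apply ℝ (Pi.single i 1)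
  have hIf : If ≠ ⊤ := hfin f hf hfs
  have hIpf : Ipf ≠ ⊤ := hfin _ (hpd_smooth f 0 hf) (hpd_supp f 0 hfs)
  have hIg : Ig ≠ ⊤ := hfin g hg hgs
  have hIpg : Ipg ≠ ⊤ := hfin _ (hpd_smooth g 1 hg) (hpd_supp g 1 hgs)
  have hIh : Ih ≠ ⊤ := hfin h hh hhs
  have hIph : Iph ≠ ⊤ := hfin _ (hpd_smooth h 2 hh) (hpd_supp h 2 hhs)
  have hq : ∀ {I : ℝ≥0∞}, I ≠ ⊤ → I ^ (4⁻¹:ℝ) ≠ ⊤ := fun hI =>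
    ENNReal.rpow_ne_top_of_nonneg (by norm_num) hI
  have hE : 8 * (If ^ (4⁻¹:ℝ) * Ipf ^ (4⁻¹:ℝ) * (Ig ^ (4⁻¹:ℝ) * Ipg ^ (4⁻¹:ℝ)) *
      (Ih ^ (4⁻¹:ℝ) * Iph ^ (4⁻¹:ℝ))) ≠ ⊤ := by
    apply ENNReal.mul_ne_top (by norm_num)
    exact ENNReal.mul_ne_top (ENNReal.mul_ne_top
      (ENNReal.mul_ne_top (hq hIf) (hq hIpf)) (ENNReal.mul_ne_top (hq hIg) (hq hIpg)))
      (ENNReal.mul_ne_top (hq hIh) (hq hIph))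
  -- convert the Bochner integral to a lintegral
  have habs : (∫ x : Fin 3 → ℝ, |f x * g x * h x|) =
      (∫⁻ x, ENNReal.ofReal |f x * g x * h x| ∂(Measure.pi μ3)).toReal := by
    rw [MeasureTheory.volume_pi, integral_eq_lintegral_of_nonneg_ae (f := fun x => |f x * g x * h x|)
      (Filter.Eventually.of_forall fun x => abs_nonneg _)
      (((hf.continuous.mul hg.continuous).mul hh.continuous).abs.aestronglyMeasurable)]
  rw [habs]
  have final := ENNReal.toReal_mono hE key
  refine final.trans (le_of_eq ?_)
  -- identify the RHS
  have hL2q : ∀ (F : (Fin 3 → ℝ) → ℝ), ContDiff ℝ (⊤ : ℕ∞) F →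
      L2 F ^ ((1:ℝ)/2) =
        ((∫⁻ x, ENNReal.ofReal (F x ^ 2) ∂(Measure.pi μ3)).toReal) ^ (4⁻¹:ℝ) := by
    intro F hF
    rw [int_sq_eq hF, ← Real.rpow_mul ENNReal.toReal_nonneg]
    norm_num
  simp only [ENNReal.toReal_mul]
  simp only [← ENNReal.toReal_rpow]
  rw [hL2q f hf, hL2q _ (hpd_smooth f 0 hf), hL2q g hg, hL2q _ (hpd_smooth g 1 hg),
    hL2q h hh, hL2q _ (hpd_smooth h 2 hh)]
  have : (8:ℝ≥0∞).toReal = 8 := by norm_num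
  rw [this]
  ring
end

section
/- There exists a constant C > 0 such that for all smooth compactly supported functions f, g, h on ℝ³ and distinct indices i, j, k ∈ {1,2,3}, ∫_{ℝ³} |f g h| dx ≤ C ‖f‖_{L²}^{1/4} ‖∂ᵢf‖_{L²}^{1/4} ‖∂ⱼf‖_{L²}^{1/4} ‖∂ᵢ∂ⱼf‖_{L²}^{1/4} ‖g‖_{L²}^{1/2} ‖∂ₖg‖_{L²}^{1/2} ‖h‖_{L²}. -/
open MeasureTheory

section Helpers

/-- Cauchy–Schwarz for integrals. -/
lemma my_cs {α : Type*} [MeasurableSpace α] {μ : Measure α} {u v : α → ℝ}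
    (hu : AEStronglyMeasurable u μ) (hv : AEStronglyMeasurable v μ)
    (hu2 : Integrable (fun a => u a ^ 2) μ) (hv2 : Integrable (fun a => v a ^ 2) μ) :
    ∫ a, |u a * v a| ∂μ ≤
      Real.sqrt (∫ a, u a ^ 2 ∂μ) * Real.sqrt (∫ a, v a ^ 2 ∂μ) := by
  have h2 : Real.HolderConjugate 2 2 := Real.holderConjugate_iff.mpr ⟨one_lt_two, by norm_num⟩
  have hof : (ENNReal.ofReal (2:ℝ)) = 2 := by
    simp [ENNReal.ofReal_ofNat]
  have hmu : MemLp (fun a => |u a|) (ENNReal.ofReal (2:ℝ)) μ := by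
    rw [hof]
    refine (memLp_two_iff_integrable_sq (continuous_abs.comp_aestronglyMeasurable hu)).2 ?_
    simpa [sq_abs] using hu2
  have hmv : MemLp (fun a => |v a|) (ENNReal.ofReal (2:ℝ)) μ := by
    rw [hof]
    refine (memLp_two_iff_integrable_sq (continuous_abs.comp_aestronglyMeasurable hv)).2 ?_
    simpa [sq_abs] using hv2
  have key := integral_mul_le_Lp_mul_Lq_of_nonneg h2
    (Filter.Eventually.of_forall fun a => abs_nonneg (u a))
    (Filter.Eventually.of_forall fun a => abs_nonneg (v a)) hmu hmv
  have e1 : ∫ a, |u a| * |v a| ∂μ = ∫ a, |u a * v a| ∂μ := by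
    simp [abs_mul]
  have e2 : ∫ a, |u a| ^ (2:ℝ) ∂μ = ∫ a, u a ^ 2 ∂μ := by
    refine integral_congr_ae (Filter.Eventually.of_forall fun a => ?_)
    show |u a| ^ (2:ℝ) = u a ^ 2
    rw [show ((2:ℝ)) = ((2:ℕ):ℝ) by norm_num, Real.rpow_natCast, sq_abs]
  have e3 : ∫ a, |v a| ^ (2:ℝ) ∂μ = ∫ a, v a ^ 2 ∂μ := by
    refine integral_congr_ae (Filter.Eventually.of_forall fun a => ?_)
    show |v a| ^ (2:ℝ) = v a ^ 2
    rw [show ((2:ℝ)) = ((2:ℕ):ℝ) by norm_num, Real.rpow_natCast, sq_abs]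
  rw [e1, e2, e3] at key
  calc ∫ a, |u a * v a| ∂μ ≤
      (∫ a, u a ^ 2 ∂μ) ^ ((1:ℝ)/2) * (∫ a, v a ^ 2 ∂μ) ^ ((1:ℝ)/2) := key
    _ = _ := by rw [← Real.sqrt_eq_rpow, ← Real.sqrt_eq_rpow]

end Helpers

lemma my_ftc_sq (u : ℝ → ℝ) (hu : ContDiff ℝ (⊤ : ℕ∞) u) (hsupp : HasCompactSupport u) (t : ℝ) :
    u t ^ 2 ≤ ∫ s, 2 * |u s * deriv u s| := by
  obtain ⟨R, hR⟩ := hsupp.isBounded.subset_closedBall 0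
  set a := min t (-(|R| + 1)) with ha
  have hat : a ≤ t := min_le_left _ _
  have hua : u a = 0 := by
    apply image_eq_zero_of_notMem_tsupport
    intro hmem
    have h1 := hR hmem
    rw [Metric.mem_closedBall, Real.dist_eq, sub_zero] at h1
    have h2 : a ≤ -(|R| + 1) := min_le_right _ _
    have h3 : -|a| ≤ a := neg_abs_le a
    have h4 : R ≤ |R| := le_abs_self R
    linarith [abs_le.mp h1]
  have hder : ∀ s, HasDerivAt (fun r => u r ^ 2) (2 * (u s * deriv u s)) s := by
    intro s
    have h1 : HasDerivAt u (deriv u s) s := (hu.differentiable (by simp) s).hasDerivAt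
    have := h1.fun_pow 2
    norm_num at this
    simpa [mul_assoc] using this
  have hcd : Continuous (deriv u) := hu.continuous_deriv (by simp)
  have hcont : Continuous fun s => 2 * (u s * deriv u s) :=
    continuous_const.mul (hu.continuous.mul hcd)
  have hFTC := intervalIntegral.integral_eq_sub_of_hasDerivAt
    (f := fun r => u r ^ 2) (f' := fun s => 2 * (u s * deriv u s))
    (fun s _ => hder s) (hcont.intervalIntegrable a t)
  have hsupp2 : HasCompactSupport fun s => 2 * |u s * deriv u s| := by
    have h1 : HasCompactSupport (u * deriv u) := hsupp.mul_right
    have h2 := h1.comp_left (g := fun r : ℝ => 2 * |r|) (by norm_num)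
    exact h2
  have hint : Integrable fun s => 2 * |u s * deriv u s| :=
    (continuous_const.mul (hu.continuous.mul hcd).abs).integrable_of_hasCompactSupport hsupp2
  have key : u t ^ 2 = ∫ s in a..t, 2 * (u s * deriv u s) := by
    rw [hFTC, hua]; ring
  rw [key, intervalIntegral.integral_of_le hat]
  calc ∫ s in Set.Ioc a t, 2 * (u s * deriv u s)
      ≤ ∫ s in Set.Ioc a t, 2 * |u s * deriv u s| := by
        refine setIntegral_mono (hcont.integrableOn_Ioc) (hint.integrableOn) ?_
        intro s
        have h := le_abs_self (u s * deriv u s)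
        show 2 * (u s * deriv u s) ≤ 2 * |u s * deriv u s|
        linarith
    _ ≤ ∫ s, 2 * |u s * deriv u s| :=
        setIntegral_le_integral hint
          (Filter.Eventually.of_forall fun s => by positivity)

noncomputable def dv (v : ℝ × ℝ × ℝ) (F : ℝ × ℝ × ℝ → ℝ) : ℝ × ℝ × ℝ → ℝ :=
  fun p => fderiv ℝ F p v

lemma dv_contDiff {F : ℝ × ℝ × ℝ → ℝ} (hF : ContDiff ℝ (⊤ : ℕ∞) F) (v : ℝ × ℝ × ℝ) :
    ContDiff ℝ (⊤ : ℕ∞) (dv v F) :=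
  (hF.fderiv_right (by simp)).clm_apply contDiff_const

lemma dv_supp {F : ℝ × ℝ × ℝ → ℝ} (hs : HasCompactSupport F) (v : ℝ × ℝ × ℝ) :
    HasCompactSupport (dv v F) :=
  hs.fderiv_apply ℝ v

-- isometries
lemma iso3 (z x : ℝ) : Isometry (fun y : ℝ => ((z, x, y) : ℝ × ℝ × ℝ)) := by
  refine Isometry.of_dist_eq fun a b => ?_
  simp only [Prod.dist_eq, dist_self]
  rw [max_eq_right dist_nonneg, max_eq_right dist_nonneg]

lemma iso2 (z y : ℝ) : Isometry (fun x : ℝ => ((z, x, y) : ℝ × ℝ × ℝ)) := by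
  refine Isometry.of_dist_eq fun a b => ?_
  simp only [Prod.dist_eq, dist_self]
  rw [max_eq_left dist_nonneg, max_eq_right dist_nonneg]

lemma iso1 (x y : ℝ) : Isometry (fun z : ℝ => ((z, x, y) : ℝ × ℝ × ℝ)) := by
  refine Isometry.of_dist_eq fun a b => ?_
  simp [Prod.dist_eq, dist_self, dist_nonneg]

lemma isoW (z : ℝ) : Isometry (fun w : ℝ × ℝ => ((z, w) : ℝ × ℝ × ℝ)) := by
  refine Isometry.of_dist_eq fun a b => ?_
  simp only [Prod.dist_eq, dist_self]
  exact max_eq_right (le_max_of_le_left dist_nonneg)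

section LineBounds
variable {F : ℝ × ℝ × ℝ → ℝ} (hF : ContDiff ℝ (⊤ : ℕ∞) F) (hs : HasCompactSupport F)

include hF hs in
lemma line_bound3 (z x y : ℝ) :
    F (z, x, y) ^ 2 ≤ ∫ s, 2 * |F (z, x, s) * dv (0,0,1) F (z, x, s)| := by
  have hsl : ContDiff ℝ (⊤ : ℕ∞) (fun y : ℝ => F (z, x, y)) :=
    hF.comp (contDiff_const.prodMk (contDiff_const.prodMk contDiff_id))
  have hss : HasCompactSupport (fun y : ℝ => F (z, x, y)) :=
    hs.comp_isClosedEmbedding (iso3 z x).isClosedEmbedding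
  have hd : ∀ s : ℝ, deriv (fun y : ℝ => F (z, x, y)) s = dv (0,0,1) F (z, x, s) := by
    intro s
    have hc : HasDerivAt (fun y : ℝ => ((z, x, y) : ℝ × ℝ × ℝ)) (0, 0, 1) s :=
      (hasDerivAt_const s z).prodMk ((hasDerivAt_const s x).prodMk (hasDerivAt_id' s))
    have := ((hF.differentiable (by simp) (z, x, s)).hasFDerivAt).comp_hasDerivAt s hc
    exact this.deriv
  have := my_ftc_sq (fun y : ℝ => F (z, x, y)) hsl hss y
  simpa only [hd] using this

include hF hs in
lemma line_bound2 (z x y : ℝ) :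
    F (z, x, y) ^ 2 ≤ ∫ s, 2 * |F (z, s, y) * dv (0,1,0) F (z, s, y)| := by
  have hsl : ContDiff ℝ (⊤ : ℕ∞) (fun x : ℝ => F (z, x, y)) :=
    hF.comp (contDiff_const.prodMk (contDiff_id.prodMk contDiff_const))
  have hss : HasCompactSupport (fun x : ℝ => F (z, x, y)) :=
    hs.comp_isClosedEmbedding (iso2 z y).isClosedEmbedding
  have hd : ∀ s : ℝ, deriv (fun x : ℝ => F (z, x, y)) s = dv (0,1,0) F (z, s, y) := by
    intro s
    have hc : HasDerivAt (fun x : ℝ => ((z, x, y) : ℝ × ℝ × ℝ)) (0, 1, 0) s :=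
      (hasDerivAt_const s z).prodMk ((hasDerivAt_id' s).prodMk (hasDerivAt_const s y))
    have := ((hF.differentiable (by simp) (z, s, y)).hasFDerivAt).comp_hasDerivAt s hc
    exact this.deriv
  have := my_ftc_sq (fun x : ℝ => F (z, x, y)) hsl hss x
  simpa only [hd] using this

include hF hs in
lemma line_bound1 (z x y : ℝ) :
    F (z, x, y) ^ 2 ≤ ∫ s, 2 * |F (s, x, y) * dv (1,0,0) F (s, x, y)| := by
  have hsl : ContDiff ℝ (⊤ : ℕ∞) (fun z : ℝ => F (z, x, y)) :=
    hF.comp (contDiff_id.prodMk (contDiff_const.prodMk contDiff_const))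
  have hss : HasCompactSupport (fun z : ℝ => F (z, x, y)) :=
    hs.comp_isClosedEmbedding (iso1 x y).isClosedEmbedding
  have hd : ∀ s : ℝ, deriv (fun z : ℝ => F (z, x, y)) s = dv (1,0,0) F (s, x, y) := by
    intro s
    have hc : HasDerivAt (fun z : ℝ => ((z, x, y) : ℝ × ℝ × ℝ)) (1, 0, 0) s :=
      (hasDerivAt_id' s).prodMk ((hasDerivAt_const s x).prodMk (hasDerivAt_const s y))
    have := ((hF.differentiable (by simp) (s, x, y)).hasFDerivAt).comp_hasDerivAt s hc
    exact this.deriv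
  have := my_ftc_sq (fun z : ℝ => F (z, x, y)) hsl hss z
  simpa only [hd] using this

end LineBounds

section Core
variable {ψ : ℝ × ℝ × ℝ → ℝ}

lemma split1 (hint : Integrable ψ) :
    ∫ p, ψ p = ∫ z, ∫ w : ℝ × ℝ, ψ (z, w) := by
  rw [show (volume : Measure (ℝ × ℝ × ℝ)) =
      (volume : Measure ℝ).prod (volume : Measure (ℝ × ℝ)) from Measure.volume_eq_prod _ _]
  exact integral_prod ψ (by rwa [← Measure.volume_eq_prod])

lemma intW (hc : Continuous ψ) (hs : HasCompactSupport ψ) (z : ℝ) :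
    Integrable (fun w : ℝ × ℝ => ψ (z, w)) :=
  (hc.comp (Continuous.prodMk_right z)).integrable_of_hasCompactSupport
    (hs.comp_isClosedEmbedding (isoW z).isClosedEmbedding)

lemma split2 {Ψ : ℝ × ℝ → ℝ} (hint : Integrable Ψ) :
    ∫ w, Ψ w = ∫ x, ∫ y, Ψ (x, y) := by
  rw [show (volume : Measure (ℝ × ℝ)) =
      (volume : Measure ℝ).prod (volume : Measure ℝ) from Measure.volume_eq_prod _ _]
  exact integral_prod Ψ (by rwa [← Measure.volume_eq_prod])

lemma int_marg (hc : Continuous ψ) (hs : HasCompactSupport ψ) :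
    Integrable (fun z => ∫ w : ℝ × ℝ, ψ (z, w)) := by
  have h : Integrable ψ ((volume : Measure ℝ).prod (volume : Measure (ℝ × ℝ))) := by
    rw [← Measure.volume_eq_prod]; exact hc.integrable_of_hasCompactSupport hs
  exact h.integral_prod_left

lemma swapW (hc : Continuous ψ) (hs : HasCompactSupport ψ) (z : ℝ) :
    ∫ w : ℝ × ℝ, ψ (z, w) = ∫ y, ∫ x, ψ (z, x, y) := by
  have hint : Integrable (fun w : ℝ × ℝ => ψ (z, w)) := intW hc hs z
  rw [split2 hint]
  have h2 : Integrable (Function.uncurry fun x y => ψ (z, x, y))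
      ((volume : Measure ℝ).prod (volume : Measure ℝ)) := by
    rw [← Measure.volume_eq_prod]; exact hint
  exact integral_integral_swap h2

lemma cont_line3 (z x : ℝ) : Continuous fun s : ℝ => ((z, x, s) : ℝ × ℝ × ℝ) :=
  continuous_const.prodMk (continuous_const.prodMk continuous_id)

lemma cont_line2 (z y : ℝ) : Continuous fun s : ℝ => ((z, s, y) : ℝ × ℝ × ℝ) :=
  continuous_const.prodMk (continuous_id.prodMk continuous_const)

lemma cont_line1 (x y : ℝ) : Continuous fun s : ℝ => ((s, x, y) : ℝ × ℝ × ℝ) :=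
  continuous_id.prodMk (continuous_const.prodMk continuous_const)

lemma int_line3 (hc : Continuous ψ) (hs : HasCompactSupport ψ) (z x : ℝ) :
    Integrable (fun s => ψ (z, x, s)) :=
  (hc.comp (cont_line3 z x)).integrable_of_hasCompactSupport
    (hs.comp_isClosedEmbedding (iso3 z x).isClosedEmbedding)

end Core

lemma cs_sqrt {u v : ℝ → ℝ} (hu : Integrable u) (hv : Integrable v)
    (hu0 : ∀ z, 0 ≤ u z) (hv0 : ∀ z, 0 ≤ v z) :
    ∫ z, Real.sqrt (u z) * Real.sqrt (v z) ≤
      Real.sqrt (∫ z, u z) * Real.sqrt (∫ z, v z) := by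
  have e : (∫ z, Real.sqrt (u z) * Real.sqrt (v z)) =
      ∫ z, |Real.sqrt (u z) * Real.sqrt (v z)| :=
    integral_congr_ae (Filter.Eventually.of_forall fun z =>
      (abs_of_nonneg (by positivity)).symm)
  have m1 : AEStronglyMeasurable (fun z => Real.sqrt (u z)) volume :=
    Real.continuous_sqrt.comp_aestronglyMeasurable hu.aestronglyMeasurable
  have m2 : AEStronglyMeasurable (fun z => Real.sqrt (v z)) volume :=
    Real.continuous_sqrt.comp_aestronglyMeasurable hv.aestronglyMeasurable
  have i1 : Integrable fun z => Real.sqrt (u z) ^ 2 :=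
    hu.congr (Filter.Eventually.of_forall fun z => (Real.sq_sqrt (hu0 z)).symm)
  have i2 : Integrable fun z => Real.sqrt (v z) ^ 2 :=
    hv.congr (Filter.Eventually.of_forall fun z => (Real.sq_sqrt (hv0 z)).symm)
  rw [e]
  have key := my_cs m1 m2 i1 i2
  rwa [integral_congr_ae (Filter.Eventually.of_forall fun z => Real.sq_sqrt (hu0 z)),
    integral_congr_ae (Filter.Eventually.of_forall fun z => Real.sq_sqrt (hv0 z))] at key

lemma final_arith {I Gb SS AA BB nH nF n2 n3 n23 nG nG1 : ℝ}
    (hI : I ≤ Real.sqrt Gb * (Real.sqrt SS * nH))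
    (hGb : Gb ≤ 2 * (nG * nG1)) (hSS : SS ≤ 2 * (Real.sqrt AA * Real.sqrt BB))
    (hAA : AA ≤ 2 * (nF * n2)) (hBB : BB ≤ 2 * (n3 * n23))
    (h0F : 0 ≤ nF) (h02 : 0 ≤ n2) (h03 : 0 ≤ n3) (h023 : 0 ≤ n23)
    (h0G : 0 ≤ nG) (h0G1 : 0 ≤ nG1) (h0H : 0 ≤ nH) :
    I ≤ 4 * Real.sqrt (Real.sqrt (nF * n2 * n3 * n23)) * Real.sqrt (nG * nG1) * nH := by
  have s2 : (0:ℝ) ≤ 2 := by norm_num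
  have hsA : Real.sqrt AA ≤ Real.sqrt 2 * Real.sqrt (nF * n2) := by
    rw [← Real.sqrt_mul s2]; exact Real.sqrt_le_sqrt hAA
  have hsB : Real.sqrt BB ≤ Real.sqrt 2 * Real.sqrt (n3 * n23) := by
    rw [← Real.sqrt_mul s2]; exact Real.sqrt_le_sqrt hBB
  have hsS : Real.sqrt SS ≤ 2 * Real.sqrt (Real.sqrt (nF * n2 * n3 * n23)) := by
    have hmm : Real.sqrt 2 * Real.sqrt 2 = 2 := Real.mul_self_sqrt s2
    have hprod : Real.sqrt AA * Real.sqrt BB ≤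
        (Real.sqrt 2 * Real.sqrt (nF * n2)) * (Real.sqrt 2 * Real.sqrt (n3 * n23)) :=
      mul_le_mul hsA hsB (Real.sqrt_nonneg _) (by positivity)
    have e4 : Real.sqrt 2 * Real.sqrt (nF * n2) * (Real.sqrt 2 * Real.sqrt (n3 * n23)) =
        (Real.sqrt 2 * Real.sqrt 2) * (Real.sqrt (nF * n2) * Real.sqrt (n3 * n23)) := by ring
    rw [hmm] at e4
    have h1 : SS ≤ 4 * (Real.sqrt (nF * n2) * Real.sqrt (n3 * n23)) := by
      rw [e4] at hprod; linarith
    have h3 : Real.sqrt (nF * n2) * Real.sqrt (n3 * n23) = Real.sqrt (nF * n2 * n3 * n23) := by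
      rw [← Real.sqrt_mul (mul_nonneg h0F h02)]; ring_nf
    calc Real.sqrt SS ≤ Real.sqrt (4 * (Real.sqrt (nF * n2) * Real.sqrt (n3 * n23))) :=
          Real.sqrt_le_sqrt h1
      _ = Real.sqrt 4 * Real.sqrt (Real.sqrt (nF * n2) * Real.sqrt (n3 * n23)) :=
          Real.sqrt_mul (by norm_num) _
      _ = 2 * Real.sqrt (Real.sqrt (nF * n2 * n3 * n23)) := by
          rw [h3, show (4:ℝ) = 2 ^ 2 by norm_num, Real.sqrt_sq s2]
  have hsG : Real.sqrt Gb ≤ Real.sqrt 2 * Real.sqrt (nG * nG1) := by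
    rw [← Real.sqrt_mul s2]; exact Real.sqrt_le_sqrt hGb
  have h2le2 : Real.sqrt 2 ≤ 2 := by
    nlinarith [Real.sq_sqrt s2, Real.sqrt_nonneg 2]
  calc I ≤ Real.sqrt Gb * (Real.sqrt SS * nH) := hI
    _ ≤ (Real.sqrt 2 * Real.sqrt (nG * nG1)) *
          ((2 * Real.sqrt (Real.sqrt (nF * n2 * n3 * n23))) * nH) :=
        mul_le_mul hsG (mul_le_mul_of_nonneg_right hsS h0H) (by positivity) (by positivity)
    _ = (2 * Real.sqrt 2) * (Real.sqrt (Real.sqrt (nF * n2 * n3 * n23)) *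
          (Real.sqrt (nG * nG1) * nH)) := by ring
    _ ≤ 4 * (Real.sqrt (Real.sqrt (nF * n2 * n3 * n23)) * (Real.sqrt (nG * nG1) * nH)) := by
        refine mul_le_mul_of_nonneg_right (by nlinarith [h2le2]) (by positivity)
    _ = 4 * Real.sqrt (Real.sqrt (nF * n2 * n3 * n23)) * Real.sqrt (nG * nG1) * nH := by ring

theorem core (F G H : ℝ × ℝ × ℝ → ℝ)
    (hF : ContDiff ℝ (⊤ : ℕ∞) F) (sF : HasCompactSupport F)
    (hG : ContDiff ℝ (⊤ : ℕ∞) G) (sG : HasCompactSupport G)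
    (hH : ContDiff ℝ (⊤ : ℕ∞) H) (sH : HasCompactSupport H) :
    ∫ p, |F p * G p * H p| ≤
      4 * Real.sqrt (Real.sqrt (Real.sqrt (∫ p, F p ^ 2) * Real.sqrt (∫ p, dv (0,1,0) F p ^ 2) *
            Real.sqrt (∫ p, dv (0,0,1) F p ^ 2) *
            Real.sqrt (∫ p, dv (0,1,0) (dv (0,0,1) F) p ^ 2))) *
        Real.sqrt (Real.sqrt (∫ p, G p ^ 2) * Real.sqrt (∫ p, dv (1,0,0) G p ^ 2)) *
        Real.sqrt (∫ p, H p ^ 2) := by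
  -- regularity of derivatives
  have cF2 : ContDiff ℝ (⊤ : ℕ∞) (dv (0,1,0) F) := dv_contDiff hF _
  have sF2 : HasCompactSupport (dv (0,1,0) F) := dv_supp sF _
  have cF3 : ContDiff ℝ (⊤ : ℕ∞) (dv (0,0,1) F) := dv_contDiff hF _
  have sF3 : HasCompactSupport (dv (0,0,1) F) := dv_supp sF _
  have cF23 : ContDiff ℝ (⊤ : ℕ∞) (dv (0,1,0) (dv (0,0,1) F)) := dv_contDiff cF3 _
  have sF23 : HasCompactSupport (dv (0,1,0) (dv (0,0,1) F)) := dv_supp sF3 _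
  have cG1 : ContDiff ℝ (⊤ : ℕ∞) (dv (1,0,0) G) := dv_contDiff hG _
  have sG1 : HasCompactSupport (dv (1,0,0) G) := dv_supp sG _
  -- product functions on ℝ³
  have cΨA : Continuous fun p => 2 * |F p * dv (0,1,0) F p| :=
    continuous_const.mul (hF.continuous.mul cF2.continuous).abs
  have sΨA : HasCompactSupport fun p => 2 * |F p * dv (0,1,0) F p| :=
    sF.mul_right.comp_left (g := fun r : ℝ => 2 * |r|) (by norm_num)
  have cΨB : Continuous fun p => 2 * |dv (0,0,1) F p * dv (0,1,0) (dv (0,0,1) F) p| :=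
    continuous_const.mul (cF3.continuous.mul cF23.continuous).abs
  have sΨB : HasCompactSupport
      fun p => 2 * |dv (0,0,1) F p * dv (0,1,0) (dv (0,0,1) F) p| :=
    sF3.mul_right.comp_left (g := fun r : ℝ => 2 * |r|) (by norm_num)
  have cΨG : Continuous fun p => 2 * |G p * dv (1,0,0) G p| :=
    continuous_const.mul (hG.continuous.mul cG1.continuous).abs
  have sΨG : HasCompactSupport fun p => 2 * |G p * dv (1,0,0) G p| :=
    sG.mul_right.comp_left (g := fun r : ℝ => 2 * |r|) (by norm_num)
  -- nonnegativity of slice integrals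
  have hA0 : ∀ z, 0 ≤ ∫ w : ℝ × ℝ, 2 * |F (z, w) * dv (0,1,0) F (z, w)| :=
    fun z => integral_nonneg fun w => by positivity
  have hB0 : ∀ z, 0 ≤ ∫ w : ℝ × ℝ,
      2 * |dv (0,0,1) F (z, w) * dv (0,1,0) (dv (0,0,1) F) (z, w)| :=
    fun z => integral_nonneg fun w => by positivity
  have hh20 : ∀ z, 0 ≤ ∫ w : ℝ × ℝ, H (z, w) ^ 2 :=
    fun z => integral_nonneg fun w => sq_nonneg _
  -- pointwise sup bound for F
  have claim_sup : ∀ z x y, F (z, x, y) ^ 2 ≤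
      2 * (Real.sqrt (∫ w : ℝ × ℝ, 2 * |F (z, w) * dv (0,1,0) F (z, w)|) *
        Real.sqrt (∫ w : ℝ × ℝ,
          2 * |dv (0,0,1) F (z, w) * dv (0,1,0) (dv (0,0,1) F) (z, w)|)) := by
    intro z x y
    have l3 := line_bound3 hF sF z x y
    have e1 : (∫ s, 2 * |F (z, x, s) * dv (0,0,1) F (z, x, s)|) =
        2 * ∫ s, |F (z, x, s) * dv (0,0,1) F (z, x, s)| := integral_const_mul 2 _
    have cs1 := my_cs (μ := (volume : Measure ℝ))
      (u := fun s => F (z, x, s)) (v := fun s => dv (0,0,1) F (z, x, s))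
      (hF.continuous.comp (cont_line3 z x)).aestronglyMeasurable
      (cF3.continuous.comp (cont_line3 z x)).aestronglyMeasurable
      (int_line3 (hF.continuous.fun_pow 2)
        (sF.comp_left (g := fun r : ℝ => r ^ 2) (by norm_num)) z x)
      (int_line3 (cF3.continuous.fun_pow 2)
        (sF3.comp_left (g := fun r : ℝ => r ^ 2) (by norm_num)) z x)
    have ha : (∫ s, F (z, x, s) ^ 2) ≤
        ∫ w : ℝ × ℝ, 2 * |F (z, w) * dv (0,1,0) F (z, w)| := by
      have hprod : Integrable (fun w : ℝ × ℝ => 2 * |F (z, w) * dv (0,1,0) F (z, w)|)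
          ((volume : Measure ℝ).prod (volume : Measure ℝ)) := intW cΨA sΨA z
      have rhsint : Integrable fun s => ∫ x', 2 * |F (z, x', s) * dv (0,1,0) F (z, x', s)| :=
        hprod.integral_prod_right
      calc (∫ s, F (z, x, s) ^ 2)
          ≤ ∫ s, ∫ x', 2 * |F (z, x', s) * dv (0,1,0) F (z, x', s)| :=
            integral_mono_of_nonneg (Filter.Eventually.of_forall fun s => sq_nonneg _)
              rhsint (Filter.Eventually.of_forall fun s => line_bound2 hF sF z x s)
        _ = ∫ w : ℝ × ℝ, 2 * |F (z, w) * dv (0,1,0) F (z, w)| := (swapW cΨA sΨA z).symm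
    have hb : (∫ s, dv (0,0,1) F (z, x, s) ^ 2) ≤
        ∫ w : ℝ × ℝ, 2 * |dv (0,0,1) F (z, w) * dv (0,1,0) (dv (0,0,1) F) (z, w)| := by
      have hprod : Integrable (fun w : ℝ × ℝ =>
          2 * |dv (0,0,1) F (z, w) * dv (0,1,0) (dv (0,0,1) F) (z, w)|)
          ((volume : Measure ℝ).prod (volume : Measure ℝ)) := intW cΨB sΨB z
      have rhsint : Integrable fun s => ∫ x',
          2 * |dv (0,0,1) F (z, x', s) * dv (0,1,0) (dv (0,0,1) F) (z, x', s)| :=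
        hprod.integral_prod_right
      calc (∫ s, dv (0,0,1) F (z, x, s) ^ 2)
          ≤ ∫ s, ∫ x', 2 * |dv (0,0,1) F (z, x', s) * dv (0,1,0) (dv (0,0,1) F) (z, x', s)| :=
            integral_mono_of_nonneg (Filter.Eventually.of_forall fun s => sq_nonneg _)
              rhsint (Filter.Eventually.of_forall fun s => line_bound2 cF3 sF3 z x s)
        _ = _ := (swapW cΨB sΨB z).symm
    calc F (z, x, y) ^ 2 ≤ ∫ s, 2 * |F (z, x, s) * dv (0,0,1) F (z, x, s)| := l3
      _ = 2 * ∫ s, |F (z, x, s) * dv (0,0,1) F (z, x, s)| := e1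
      _ ≤ 2 * (Real.sqrt (∫ s, F (z, x, s) ^ 2) *
            Real.sqrt (∫ s, dv (0,0,1) F (z, x, s) ^ 2)) := by
          have := cs1; nlinarith [this]
      _ ≤ _ := by
          have s1 := Real.sqrt_le_sqrt ha
          have s2 := Real.sqrt_le_sqrt hb
          have := mul_le_mul s1 s2 (Real.sqrt_nonneg _) (Real.sqrt_nonneg _)
          linarith
  -- pointwise bound for the z-sup of the slice L² norm of G
  have hΨGprod : Integrable (fun p => 2 * |G p * dv (1,0,0) G p|)
      ((volume : Measure ℝ).prod (volume : Measure (ℝ × ℝ))) :=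
    cΨG.integrable_of_hasCompactSupport sΨG
  have claim_g : ∀ z, (∫ w : ℝ × ℝ, G (z, w) ^ 2) ≤
      ∫ p, 2 * |G p * dv (1,0,0) G p| := by
    intro z
    have rhsint : Integrable fun w : ℝ × ℝ => ∫ s, 2 * |G (s, w) * dv (1,0,0) G (s, w)| :=
      hΨGprod.integral_prod_right
    calc (∫ w : ℝ × ℝ, G (z, w) ^ 2)
        ≤ ∫ w : ℝ × ℝ, ∫ s, 2 * |G (s, w) * dv (1,0,0) G (s, w)| :=
          integral_mono_of_nonneg (Filter.Eventually.of_forall fun w => sq_nonneg _)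
            rhsint (Filter.Eventually.of_forall fun w => line_bound1 hG sG z w.1 w.2)
      _ = ∫ s, ∫ w : ℝ × ℝ, 2 * |G (s, w) * dv (1,0,0) G (s, w)| := by
          exact integral_integral_swap (f := fun w s => 2 * |G (s, w) * dv (1,0,0) G (s, w)|)
            hΨGprod.swap
      _ = ∫ p, 2 * |G p * dv (1,0,0) G p| :=
          (split1 (cΨG.integrable_of_hasCompactSupport sΨG)).symm
  -- integrability of the z-marginals
  have hA_int : Integrable fun z => ∫ w : ℝ × ℝ, 2 * |F (z, w) * dv (0,1,0) F (z, w)| :=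
    int_marg cΨA sΨA
  have hB_int : Integrable fun z => ∫ w : ℝ × ℝ,
      2 * |dv (0,0,1) F (z, w) * dv (0,1,0) (dv (0,0,1) F) (z, w)| := int_marg cΨB sΨB
  have hh2_int : Integrable fun z => ∫ w : ℝ × ℝ, H (z, w) ^ 2 :=
    int_marg (hH.continuous.fun_pow 2) (sH.comp_left (g := fun r : ℝ => r ^ 2) (by norm_num))
  -- measurability / integrability of sqrt combinations
  have hS0 : ∀ z, (0:ℝ) ≤ 2 * (Real.sqrt (∫ w : ℝ × ℝ, 2 * |F (z, w) * dv (0,1,0) F (z, w)|) *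
      Real.sqrt (∫ w : ℝ × ℝ, 2 * |dv (0,0,1) F (z, w) * dv (0,1,0) (dv (0,0,1) F) (z, w)|)) :=
    fun z => by positivity
  have hS_meas : AEStronglyMeasurable (fun z =>
      2 * (Real.sqrt (∫ w : ℝ × ℝ, 2 * |F (z, w) * dv (0,1,0) F (z, w)|) *
        Real.sqrt (∫ w : ℝ × ℝ, 2 * |dv (0,0,1) F (z, w) * dv (0,1,0) (dv (0,0,1) F) (z, w)|)))
      volume :=
    (((Real.continuous_sqrt.comp_aestronglyMeasurable hA_int.aestronglyMeasurable).mul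
      (Real.continuous_sqrt.comp_aestronglyMeasurable hB_int.aestronglyMeasurable)).const_mul 2)
  have hS_int : Integrable (fun z =>
      2 * (Real.sqrt (∫ w : ℝ × ℝ, 2 * |F (z, w) * dv (0,1,0) F (z, w)|) *
        Real.sqrt (∫ w : ℝ × ℝ, 2 * |dv (0,0,1) F (z, w) * dv (0,1,0) (dv (0,0,1) F) (z, w)|))) := by
    refine Integrable.mono' (hA_int.add hB_int) hS_meas
      (Filter.Eventually.of_forall fun z => ?_)
    rw [Real.norm_eq_abs, abs_of_nonneg (hS0 z)]
    simp only [Pi.add_apply]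
    nlinarith [Real.sq_sqrt (hA0 z), Real.sq_sqrt (hB0 z),
      sq_nonneg (Real.sqrt (∫ w : ℝ × ℝ, 2 * |F (z, w) * dv (0,1,0) F (z, w)|) -
        Real.sqrt (∫ w : ℝ × ℝ, 2 * |dv (0,0,1) F (z, w) * dv (0,1,0) (dv (0,0,1) F) (z, w)|))]
  -- inner slice bound, for each z
  have inner_bd : ∀ z, (∫ w : ℝ × ℝ, |F (z, w) * G (z, w) * H (z, w)|) ≤
      Real.sqrt (∫ p, 2 * |G p * dv (1,0,0) G p|) *
        (Real.sqrt (2 * (Real.sqrt (∫ w : ℝ × ℝ, 2 * |F (z, w) * dv (0,1,0) F (z, w)|) *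
          Real.sqrt (∫ w : ℝ × ℝ, 2 * |dv (0,0,1) F (z, w) * dv (0,1,0) (dv (0,0,1) F) (z, w)|))) *
          Real.sqrt (∫ w : ℝ × ℝ, H (z, w) ^ 2)) := by
    intro z
    have hGH_int : Integrable fun w : ℝ × ℝ => |G (z, w) * H (z, w)| :=
      intW ((hG.continuous.mul hH.continuous).abs)
        (sG.mul_right.comp_left (g := abs) abs_zero) z
    have csGH := my_cs (μ := (volume : Measure (ℝ × ℝ)))
      (u := fun w => G (z, w)) (v := fun w => H (z, w))
      (hG.continuous.comp (Continuous.prodMk_right z)).aestronglyMeasurable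
      (hH.continuous.comp (Continuous.prodMk_right z)).aestronglyMeasurable
      (intW (hG.continuous.fun_pow 2) (sG.comp_left (g := fun r : ℝ => r ^ 2) (by norm_num)) z)
      (intW (hH.continuous.fun_pow 2) (sH.comp_left (g := fun r : ℝ => r ^ 2) (by norm_num)) z)
    have hFb : ∀ w : ℝ × ℝ, |F (z, w)| ≤
        Real.sqrt (2 * (Real.sqrt (∫ w : ℝ × ℝ, 2 * |F (z, w) * dv (0,1,0) F (z, w)|) *
          Real.sqrt (∫ w : ℝ × ℝ,
            2 * |dv (0,0,1) F (z, w) * dv (0,1,0) (dv (0,0,1) F) (z, w)|))) := by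
      intro w
      rw [← Real.sqrt_sq_eq_abs]
      exact Real.sqrt_le_sqrt (claim_sup z w.1 w.2)
    calc (∫ w : ℝ × ℝ, |F (z, w) * G (z, w) * H (z, w)|)
        ≤ ∫ w : ℝ × ℝ,
            Real.sqrt (2 * (Real.sqrt (∫ w : ℝ × ℝ, 2 * |F (z, w) * dv (0,1,0) F (z, w)|) *
              Real.sqrt (∫ w : ℝ × ℝ,
                2 * |dv (0,0,1) F (z, w) * dv (0,1,0) (dv (0,0,1) F) (z, w)|))) *
            |G (z, w) * H (z, w)| := by
          refine integral_mono_of_nonneg (Filter.Eventually.of_forall fun w => abs_nonneg _)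
            (hGH_int.const_mul _) (Filter.Eventually.of_forall fun w => ?_)
          dsimp only
          rw [abs_mul, abs_mul, abs_mul, mul_assoc]
          exact mul_le_mul_of_nonneg_right (hFb w)
            (mul_nonneg (abs_nonneg _) (abs_nonneg _))
      _ = Real.sqrt (2 * (Real.sqrt (∫ w : ℝ × ℝ, 2 * |F (z, w) * dv (0,1,0) F (z, w)|) *
              Real.sqrt (∫ w : ℝ × ℝ,
                2 * |dv (0,0,1) F (z, w) * dv (0,1,0) (dv (0,0,1) F) (z, w)|))) *
            ∫ w : ℝ × ℝ, |G (z, w) * H (z, w)| := integral_const_mul _ _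
      _ ≤ Real.sqrt (2 * (Real.sqrt (∫ w : ℝ × ℝ, 2 * |F (z, w) * dv (0,1,0) F (z, w)|) *
              Real.sqrt (∫ w : ℝ × ℝ,
                2 * |dv (0,0,1) F (z, w) * dv (0,1,0) (dv (0,0,1) F) (z, w)|))) *
            (Real.sqrt (∫ w : ℝ × ℝ, G (z, w) ^ 2) * Real.sqrt (∫ w : ℝ × ℝ, H (z, w) ^ 2)) :=
          mul_le_mul_of_nonneg_left csGH (Real.sqrt_nonneg _)
      _ ≤ Real.sqrt (2 * (Real.sqrt (∫ w : ℝ × ℝ, 2 * |F (z, w) * dv (0,1,0) F (z, w)|) *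
              Real.sqrt (∫ w : ℝ × ℝ,
                2 * |dv (0,0,1) F (z, w) * dv (0,1,0) (dv (0,0,1) F) (z, w)|))) *
            (Real.sqrt (∫ p, 2 * |G p * dv (1,0,0) G p|) *
              Real.sqrt (∫ w : ℝ × ℝ, H (z, w) ^ 2)) :=
          mul_le_mul_of_nonneg_left
            (mul_le_mul_of_nonneg_right (Real.sqrt_le_sqrt (claim_g z)) (Real.sqrt_nonneg _))
            (Real.sqrt_nonneg _)
      _ = _ := by ring
  -- global integrabilities on ℝ³
  have hFGH_int : Integrable fun p => |F p * G p * H p| :=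
    (((hF.continuous.mul hG.continuous).mul hH.continuous).abs).integrable_of_hasCompactSupport
      ((sF.mul_right.mul_right).comp_left (g := abs) abs_zero)
  have intF2 : Integrable fun p => F p ^ 2 :=
    (hF.continuous.fun_pow 2).integrable_of_hasCompactSupport
      (sF.comp_left (g := fun r : ℝ => r ^ 2) (by norm_num))
  have intFd2 : Integrable fun p => dv (0,1,0) F p ^ 2 :=
    (cF2.continuous.fun_pow 2).integrable_of_hasCompactSupport
      (sF2.comp_left (g := fun r : ℝ => r ^ 2) (by norm_num))
  have intFd3 : Integrable fun p => dv (0,0,1) F p ^ 2 :=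
    (cF3.continuous.fun_pow 2).integrable_of_hasCompactSupport
      (sF3.comp_left (g := fun r : ℝ => r ^ 2) (by norm_num))
  have intFd23 : Integrable fun p => dv (0,1,0) (dv (0,0,1) F) p ^ 2 :=
    (cF23.continuous.fun_pow 2).integrable_of_hasCompactSupport
      (sF23.comp_left (g := fun r : ℝ => r ^ 2) (by norm_num))
  have intG2 : Integrable fun p => G p ^ 2 :=
    (hG.continuous.fun_pow 2).integrable_of_hasCompactSupport
      (sG.comp_left (g := fun r : ℝ => r ^ 2) (by norm_num))
  have intG12 : Integrable fun p => dv (1,0,0) G p ^ 2 :=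
    (cG1.continuous.fun_pow 2).integrable_of_hasCompactSupport
      (sG1.comp_left (g := fun r : ℝ => r ^ 2) (by norm_num))
  have intH2 : Integrable fun p => H p ^ 2 :=
    (hH.continuous.fun_pow 2).integrable_of_hasCompactSupport
      (sH.comp_left (g := fun r : ℝ => r ^ 2) (by norm_num))
  -- Cauchy–Schwarz in z
  have cs_z := cs_sqrt hS_int hh2_int hS0 hh20
  have h_rhs_int : Integrable fun z =>
      Real.sqrt (∫ p, 2 * |G p * dv (1,0,0) G p|) *
        (Real.sqrt (2 * (Real.sqrt (∫ w : ℝ × ℝ, 2 * |F (z, w) * dv (0,1,0) F (z, w)|) *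
          Real.sqrt (∫ w : ℝ × ℝ, 2 * |dv (0,0,1) F (z, w) * dv (0,1,0) (dv (0,0,1) F) (z, w)|))) *
          Real.sqrt (∫ w : ℝ × ℝ, H (z, w) ^ 2)) := by
    refine Integrable.const_mul ?_ _
    refine Integrable.mono' (hS_int.add hh2_int)
      ((Real.continuous_sqrt.comp_aestronglyMeasurable hS_int.aestronglyMeasurable).mul
        (Real.continuous_sqrt.comp_aestronglyMeasurable hh2_int.aestronglyMeasurable))
      (Filter.Eventually.of_forall fun z => ?_)
    rw [Real.norm_eq_abs, abs_of_nonneg (by positivity)]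
    simp only [Pi.add_apply]
    nlinarith [Real.sq_sqrt (hS0 z), Real.sq_sqrt (hh20 z),
      sq_nonneg (Real.sqrt (2 * (Real.sqrt (∫ w : ℝ × ℝ, 2 * |F (z, w) * dv (0,1,0) F (z, w)|) *
          Real.sqrt (∫ w : ℝ × ℝ, 2 * |dv (0,0,1) F (z, w) * dv (0,1,0) (dv (0,0,1) F) (z, w)|)))
        - Real.sqrt (∫ w : ℝ × ℝ, H (z, w) ^ 2))]
  have h_inth2 : (∫ z, ∫ w : ℝ × ℝ, H (z, w) ^ 2) = ∫ p, H p ^ 2 := (split1 intH2).symm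
  have hGb : (∫ p, 2 * |G p * dv (1,0,0) G p|) ≤
      2 * (Real.sqrt (∫ p, G p ^ 2) * Real.sqrt (∫ p, dv (1,0,0) G p ^ 2)) := by
    rw [integral_const_mul]
    exact mul_le_mul_of_nonneg_left
      (my_cs hG.continuous.aestronglyMeasurable cG1.continuous.aestronglyMeasurable
        intG2 intG12) (by norm_num)
  have hSS : (∫ z, 2 * (Real.sqrt (∫ w : ℝ × ℝ, 2 * |F (z, w) * dv (0,1,0) F (z, w)|) *
      Real.sqrt (∫ w : ℝ × ℝ, 2 * |dv (0,0,1) F (z, w) * dv (0,1,0) (dv (0,0,1) F) (z, w)|))) ≤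
      2 * (Real.sqrt (∫ z, ∫ w : ℝ × ℝ, 2 * |F (z, w) * dv (0,1,0) F (z, w)|) *
        Real.sqrt (∫ z, ∫ w : ℝ × ℝ,
          2 * |dv (0,0,1) F (z, w) * dv (0,1,0) (dv (0,0,1) F) (z, w)|)) := by
    rw [integral_const_mul]
    exact mul_le_mul_of_nonneg_left (cs_sqrt hA_int hB_int hA0 hB0) (by norm_num)
  have hAA : (∫ z, ∫ w : ℝ × ℝ, 2 * |F (z, w) * dv (0,1,0) F (z, w)|) ≤
      2 * (Real.sqrt (∫ p, F p ^ 2) * Real.sqrt (∫ p, dv (0,1,0) F p ^ 2)) := by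
    rw [← split1 (cΨA.integrable_of_hasCompactSupport sΨA), integral_const_mul]
    exact mul_le_mul_of_nonneg_left
      (my_cs hF.continuous.aestronglyMeasurable cF2.continuous.aestronglyMeasurable
        intF2 intFd2) (by norm_num)
  have hBB : (∫ z, ∫ w : ℝ × ℝ,
      2 * |dv (0,0,1) F (z, w) * dv (0,1,0) (dv (0,0,1) F) (z, w)|) ≤
      2 * (Real.sqrt (∫ p, dv (0,0,1) F p ^ 2) *
        Real.sqrt (∫ p, dv (0,1,0) (dv (0,0,1) F) p ^ 2)) := by
    rw [← split1 (cΨB.integrable_of_hasCompactSupport sΨB), integral_const_mul]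
    exact mul_le_mul_of_nonneg_left
      (my_cs cF3.continuous.aestronglyMeasurable cF23.continuous.aestronglyMeasurable
        intFd3 intFd23) (by norm_num)
  have main : (∫ p, |F p * G p * H p|) ≤
      Real.sqrt (∫ p, 2 * |G p * dv (1,0,0) G p|) *
        (Real.sqrt (∫ z, 2 * (Real.sqrt (∫ w : ℝ × ℝ, 2 * |F (z, w) * dv (0,1,0) F (z, w)|) *
          Real.sqrt (∫ w : ℝ × ℝ,
            2 * |dv (0,0,1) F (z, w) * dv (0,1,0) (dv (0,0,1) F) (z, w)|))) *
          Real.sqrt (∫ p, H p ^ 2)) := by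
    calc (∫ p, |F p * G p * H p|)
        = ∫ z, ∫ w : ℝ × ℝ, |F (z, w) * G (z, w) * H (z, w)| := split1 hFGH_int
      _ ≤ ∫ z, Real.sqrt (∫ p, 2 * |G p * dv (1,0,0) G p|) *
            (Real.sqrt (2 * (Real.sqrt (∫ w : ℝ × ℝ, 2 * |F (z, w) * dv (0,1,0) F (z, w)|) *
              Real.sqrt (∫ w : ℝ × ℝ,
                2 * |dv (0,0,1) F (z, w) * dv (0,1,0) (dv (0,0,1) F) (z, w)|))) *
              Real.sqrt (∫ w : ℝ × ℝ, H (z, w) ^ 2)) :=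
          integral_mono_of_nonneg
            (Filter.Eventually.of_forall fun z => integral_nonneg fun w => abs_nonneg _)
            h_rhs_int (Filter.Eventually.of_forall inner_bd)
      _ = Real.sqrt (∫ p, 2 * |G p * dv (1,0,0) G p|) *
            ∫ z, Real.sqrt (2 * (Real.sqrt (∫ w : ℝ × ℝ, 2 * |F (z, w) * dv (0,1,0) F (z, w)|) *
              Real.sqrt (∫ w : ℝ × ℝ,
                2 * |dv (0,0,1) F (z, w) * dv (0,1,0) (dv (0,0,1) F) (z, w)|))) *
              Real.sqrt (∫ w : ℝ × ℝ, H (z, w) ^ 2) := integral_const_mul _ _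
      _ ≤ Real.sqrt (∫ p, 2 * |G p * dv (1,0,0) G p|) *
            (Real.sqrt (∫ z, 2 * (Real.sqrt (∫ w : ℝ × ℝ, 2 * |F (z, w) * dv (0,1,0) F (z, w)|) *
              Real.sqrt (∫ w : ℝ × ℝ,
                2 * |dv (0,0,1) F (z, w) * dv (0,1,0) (dv (0,0,1) F) (z, w)|))) *
              Real.sqrt (∫ z, ∫ w : ℝ × ℝ, H (z, w) ^ 2)) :=
          mul_le_mul_of_nonneg_left cs_z (Real.sqrt_nonneg _)
      _ = _ := by rw [h_inth2]
  exact final_arith main hGb hSS hAA hBB (Real.sqrt_nonneg _) (Real.sqrt_nonneg _)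
    (Real.sqrt_nonneg _) (Real.sqrt_nonneg _) (Real.sqrt_nonneg _) (Real.sqrt_nonneg _)
    (Real.sqrt_nonneg _)





section Transfer
variable {i j k : Fin 3}

lemma vec3_inj (hij : i ≠ j) (hjk : j ≠ k) (hik : i ≠ k) :
    Function.Injective (![k, i, j] : Fin 3 → Fin 3) := by
  intro a b hab
  fin_cases a <;> fin_cases b <;> simp_all <;> simp_all [eq_comm]

noncomputable def tau3 (hij : i ≠ j) (hjk : j ≠ k) (hik : i ≠ k) : Fin 3 ≃ Fin 3 :=
  (Equiv.ofBijective (![k, i, j] : Fin 3 → Fin 3)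
    ((Finite.injective_iff_bijective).1 (vec3_inj hij hjk hik))).symm

noncomputable def em3 (hij : i ≠ j) (hjk : j ≠ k) (hik : i ≠ k) :
    (Fin 3 → ℝ) ≃ᵐ ℝ × ℝ × ℝ :=
  ((MeasurableEquiv.piCongrLeft (fun _ => ℝ) (tau3 hij hjk hik)).trans
    (MeasurableEquiv.piFinSuccAbove (fun _ => ℝ) 0)).trans
    ((MeasurableEquiv.refl ℝ).prodCongr MeasurableEquiv.finTwoArrow)

lemma em3_apply (hij : i ≠ j) (hjk : j ≠ k) (hik : i ≠ k) (x : Fin 3 → ℝ) :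
    em3 hij hjk hik x = (x k, x i, x j) := by
  have hy : ∀ m : Fin 3,
      (MeasurableEquiv.piCongrLeft (fun _ => ℝ) (tau3 hij hjk hik)) x m =
        x ((tau3 hij hjk hik).symm m) := by
    intro m
    have h1 := MeasurableEquiv.piCongrLeft_apply_apply (tau3 hij hjk hik)
      (β := fun _ => ℝ) x ((tau3 hij hjk hik).symm m)
    simpa using h1
  have hsymm : ∀ m : Fin 3, (tau3 hij hjk hik).symm m = (![k, i, j] : Fin 3 → Fin 3) m := by
    intro m; rfl
  show ((MeasurableEquiv.piCongrLeft (fun _ => ℝ) (tau3 hij hjk hik)) x 0,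
        (MeasurableEquiv.piCongrLeft (fun _ => ℝ) (tau3 hij hjk hik)) x 1,
        (MeasurableEquiv.piCongrLeft (fun _ => ℝ) (tau3 hij hjk hik)) x 2) = (x k, x i, x j)
  rw [hy 0, hy 1, hy 2, hsymm 0, hsymm 1, hsymm 2]
  simp

lemma em3_mp (hij : i ≠ j) (hjk : j ≠ k) (hik : i ≠ k) :
    MeasurePreserving (⇑(em3 hij hjk hik)) volume volume := by
  have h1 : MeasurePreserving
      (⇑(MeasurableEquiv.piCongrLeft (fun _ : Fin 3 => ℝ) (tau3 hij hjk hik)))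
      volume volume :=
    volume_measurePreserving_piCongrLeft _ _
  have h2 : MeasurePreserving (⇑(MeasurableEquiv.piFinSuccAbove (fun _ : Fin 3 => ℝ) 0))
      volume volume := volume_preserving_piFinSuccAbove _ 0
  have h3 : MeasurePreserving
      (⇑((MeasurableEquiv.refl ℝ).prodCongr (MeasurableEquiv.finTwoArrow (α := ℝ))))
      volume volume := by
    have := (MeasurePreserving.id (volume : Measure ℝ)).prod
      (volume_preserving_finTwoArrow ℝ)
    exact this
  exact (h3.comp (h2.comp h1) : _)

end Transfer


section Lin
variable {i j k : Fin 3}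

lemma tri3 (hij : i ≠ j) (hjk : j ≠ k) (hik : i ≠ k) (m : Fin 3) :
    m = i ∨ m = j ∨ m = k := by
  have h1 : i.val ≠ j.val := by simpa [Fin.ext_iff] using hij
  have h2 : j.val ≠ k.val := by simpa [Fin.ext_iff] using hjk
  have h3 : i.val ≠ k.val := by simpa [Fin.ext_iff] using hik
  have := i.isLt; have := j.isLt; have := k.isLt; have := m.isLt
  rw [Fin.ext_iff, Fin.ext_iff, Fin.ext_iff]
  omega

noncomputable def Lmap (hij : i ≠ j) (hjk : j ≠ k) (hik : i ≠ k) :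
    (Fin 3 → ℝ) ≃L[ℝ] ℝ × ℝ × ℝ :=
  LinearEquiv.toContinuousLinearEquiv
  { toFun := fun x => (x k, x i, x j)
    map_add' := fun x y => rfl
    map_smul' := fun c x => rfl
    invFun := fun p => Pi.single k p.1 + Pi.single i p.2.1 + Pi.single j p.2.2
    left_inv := by
      intro x
      funext m
      rcases tri3 hij hjk hik m with rfl | rfl | rfl <;>
        simp [Pi.single_eq_same, Pi.single_eq_of_ne, hij, hjk, hik,
          hij.symm, hjk.symm, hik.symm]
    right_inv := by
      intro p
      refine Prod.ext ?_ (Prod.ext ?_ ?_) <;>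
        simp [Pi.single_eq_same, Pi.single_eq_of_ne, hij, hjk, hik,
          hij.symm, hjk.symm, hik.symm] }

lemma Lmap_apply (hij : i ≠ j) (hjk : j ≠ k) (hik : i ≠ k) (x : Fin 3 → ℝ) :
    Lmap hij hjk hik x = (x k, x i, x j) := rfl

lemma Lmap_single_i (hij : i ≠ j) (hjk : j ≠ k) (hik : i ≠ k) :
    Lmap hij hjk hik (Pi.single i 1) = ((0:ℝ), (1:ℝ), (0:ℝ)) := by
  rw [Lmap_apply]
  refine Prod.ext ?_ (Prod.ext ?_ ?_) <;>
    simp [Pi.single_eq_same, Pi.single_eq_of_ne, hik.symm, hij.symm]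

lemma Lmap_single_j (hij : i ≠ j) (hjk : j ≠ k) (hik : i ≠ k) :
    Lmap hij hjk hik (Pi.single j 1) = ((0:ℝ), (0:ℝ), (1:ℝ)) := by
  rw [Lmap_apply]
  refine Prod.ext ?_ (Prod.ext ?_ ?_) <;>
    simp [Pi.single_eq_same, Pi.single_eq_of_ne, hjk, hij]

lemma Lmap_single_k (hij : i ≠ j) (hjk : j ≠ k) (hik : i ≠ k) :
    Lmap hij hjk hik (Pi.single k 1) = ((1:ℝ), (0:ℝ), (0:ℝ)) := by
  rw [Lmap_apply]
  refine Prod.ext ?_ (Prod.ext ?_ ?_) <;>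
    simp [Pi.single_eq_same, Pi.single_eq_of_ne, hik, hjk.symm]

end Lin

lemma sqrt_sqrt_mul4 {a b c d : ℝ} (ha : 0 ≤ a) (hb : 0 ≤ b) (hc : 0 ≤ c) (hd : 0 ≤ d) :
    Real.sqrt (Real.sqrt (a * b * c * d)) =
      a ^ ((1:ℝ)/4) * b ^ ((1:ℝ)/4) * c ^ ((1:ℝ)/4) * d ^ ((1:ℝ)/4) := by
  rw [Real.sqrt_eq_rpow, Real.sqrt_eq_rpow, ← Real.rpow_mul (by positivity)]
  norm_num
  rw [Real.mul_rpow (by positivity) hd, Real.mul_rpow (by positivity) hc,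
    Real.mul_rpow ha hb]

lemma sqrt_mul2 {a b : ℝ} (ha : 0 ≤ a) (hb : 0 ≤ b) :
    Real.sqrt (a * b) = a ^ ((1:ℝ)/2) * b ^ ((1:ℝ)/2) := by
  rw [Real.sqrt_mul ha, Real.sqrt_eq_rpow, Real.sqrt_eq_rpow]

/-- Anisotropic triple-product inequality with fourth-root factors:
for distinct `i j k`,
`∫ |fgh| ≤ C ‖f‖^{1/4}‖∂ᵢf‖^{1/4}‖∂ⱼf‖^{1/4}‖∂ᵢ∂ⱼf‖^{1/4} ‖g‖^{1/2}‖∂ₖg‖^{1/2} ‖h‖`. -/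
theorem anisotropic_triple_product_quarter :
    ∃ C > 0, ∀ (f g h : (Fin 3 → ℝ) → ℝ) (i j k : Fin 3),
      i ≠ j → j ≠ k → i ≠ k →
      ContDiff ℝ (⊤ : ℕ∞) f → HasCompactSupport f →
      ContDiff ℝ (⊤ : ℕ∞) g → HasCompactSupport g →
      ContDiff ℝ (⊤ : ℕ∞) h → HasCompactSupport h →
      (∫ x : Fin 3 → ℝ, |f x * g x * h x|) ≤
        C * L2 f ^ ((1:ℝ)/4) * L2 (pd i f) ^ ((1:ℝ)/4) *
          L2 (pd j f) ^ ((1:ℝ)/4) * L2 (pd i (pd j f)) ^ ((1:ℝ)/4) *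
          L2 g ^ ((1:ℝ)/2) * L2 (pd k g) ^ ((1:ℝ)/2) * L2 h := by
  refine ⟨4, by norm_num, ?_⟩
  intro f g h i j k hij hjk hik hf sf hg sg hh sh
  set L := Lmap hij hjk hik with hLdef
  -- integral transfer
  have hint : ∀ φ : ℝ × ℝ × ℝ → ℝ, (∫ x : Fin 3 → ℝ, φ (L x)) = ∫ p, φ p := by
    intro φ
    have h1 := (em3_mp hij hjk hik).integral_comp
      (em3 hij hjk hik).measurableEmbedding φ
    rw [← h1]
    exact integral_congr_ae (Filter.Eventually.of_forall fun x => by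
      dsimp only
      rw [em3_apply hij hjk hik, hLdef, Lmap_apply])
  set F : ℝ × ℝ × ℝ → ℝ := fun p => f (L.symm p) with hFdef
  set G : ℝ × ℝ × ℝ → ℝ := fun p => g (L.symm p) with hGdef
  set H : ℝ × ℝ × ℝ → ℝ := fun p => h (L.symm p) with hHdef
  have hfF : ∀ x, f x = F (L x) := fun x => by rw [hFdef]; simp
  have hgG : ∀ x, g x = G (L x) := fun x => by rw [hGdef]; simp
  have hhH : ∀ x, h x = H (L x) := fun x => by rw [hHdef]; simp
  have hF : ContDiff ℝ (⊤ : ℕ∞) F := hf.comp L.symm.contDiff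
  have sF : HasCompactSupport F := sf.comp_homeomorph L.symm.toHomeomorph
  have hG : ContDiff ℝ (⊤ : ℕ∞) G := hg.comp L.symm.contDiff
  have sG : HasCompactSupport G := sg.comp_homeomorph L.symm.toHomeomorph
  have hH : ContDiff ℝ (⊤ : ℕ∞) H := hh.comp L.symm.contDiff
  have sH : HasCompactSupport H := sh.comp_homeomorph L.symm.toHomeomorph
  -- derivative transfers
  have hpdi : pd i f = fun x => dv (0,1,0) F (L x) := by
    funext x
    show fderiv ℝ f x (Pi.single i 1) = fderiv ℝ F (L x) (0,1,0)
    rw [show f = F ∘ ⇑L from funext hfF, L.comp_right_fderiv]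
    rw [ContinuousLinearMap.comp_apply]
    rw [show (↑L : (Fin 3 → ℝ) →L[ℝ] ℝ × ℝ × ℝ) (Pi.single i 1) = L (Pi.single i 1) from rfl]
    rw [hLdef, Lmap_single_i hij hjk hik]
  have hpdj : pd j f = fun x => dv (0,0,1) F (L x) := by
    funext x
    show fderiv ℝ f x (Pi.single j 1) = fderiv ℝ F (L x) (0,0,1)
    rw [show f = F ∘ ⇑L from funext hfF, L.comp_right_fderiv]
    rw [ContinuousLinearMap.comp_apply]
    rw [show (↑L : (Fin 3 → ℝ) →L[ℝ] ℝ × ℝ × ℝ) (Pi.single j 1) = L (Pi.single j 1) from rfl]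
    rw [hLdef, Lmap_single_j hij hjk hik]
  have hpdk : pd k g = fun x => dv (1,0,0) G (L x) := by
    funext x
    show fderiv ℝ g x (Pi.single k 1) = fderiv ℝ G (L x) (1,0,0)
    rw [show g = G ∘ ⇑L from funext hgG, L.comp_right_fderiv]
    rw [ContinuousLinearMap.comp_apply]
    rw [show (↑L : (Fin 3 → ℝ) →L[ℝ] ℝ × ℝ × ℝ) (Pi.single k 1) = L (Pi.single k 1) from rfl]
    rw [hLdef, Lmap_single_k hij hjk hik]
  have hpdij : pd i (pd j f) = fun x => dv (0,1,0) (dv (0,0,1) F) (L x) := by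
    funext x
    show fderiv ℝ (pd j f) x (Pi.single i 1) = fderiv ℝ (dv (0,0,1) F) (L x) (0,1,0)
    rw [show pd j f = (dv (0,0,1) F) ∘ ⇑L from hpdj, L.comp_right_fderiv]
    rw [ContinuousLinearMap.comp_apply]
    rw [show (↑L : (Fin 3 → ℝ) →L[ℝ] ℝ × ℝ × ℝ) (Pi.single i 1) = L (Pi.single i 1) from rfl]
    rw [hLdef, Lmap_single_i hij hjk hik]
  -- L2 transfers
  have eL2 : ∀ (φ : (Fin 3 → ℝ) → ℝ) (Φ : ℝ × ℝ × ℝ → ℝ), (∀ x, φ x = Φ (L x)) →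
      L2 φ = Real.sqrt (∫ p, Φ p ^ 2) := by
    intro φ Φ hφ
    show (∫ x, φ x ^ 2) ^ ((1:ℝ)/2) = Real.sqrt (∫ p, Φ p ^ 2)
    rw [← Real.sqrt_eq_rpow]
    congr 1
    calc (∫ x, φ x ^ 2) = ∫ x, Φ (L x) ^ 2 :=
          integral_congr_ae (Filter.Eventually.of_forall fun x => by
            dsimp only; rw [hφ x])
      _ = ∫ p, Φ p ^ 2 := hint fun p => Φ p ^ 2
  have hcore := core F G H hF sF hG sG hH sH
  have eLHS : (∫ x : Fin 3 → ℝ, |f x * g x * h x|) = ∫ p, |F p * G p * H p| := by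
    calc (∫ x : Fin 3 → ℝ, |f x * g x * h x|)
        = ∫ x : Fin 3 → ℝ, |F (L x) * G (L x) * H (L x)| :=
          integral_congr_ae (Filter.Eventually.of_forall fun x => by
            dsimp only; rw [hfF x, hgG x, hhH x])
      _ = _ := hint fun p => |F p * G p * H p|
  rw [eLHS, eL2 f F hfF, eL2 (pd i f) (dv (0,1,0) F) (fun x => congrFun hpdi x),
    eL2 (pd j f) (dv (0,0,1) F) (fun x => congrFun hpdj x),
    eL2 (pd i (pd j f)) (dv (0,1,0) (dv (0,0,1) F)) (fun x => congrFun hpdij x),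
    eL2 g G hgG, eL2 (pd k g) (dv (1,0,0) G) (fun x => congrFun hpdk x), eL2 h H hhH]
  calc (∫ p, |F p * G p * H p|) ≤ _ := hcore
    _ = 4 * Real.sqrt (∫ p, F p ^ 2) ^ ((1:ℝ)/4) *
          Real.sqrt (∫ p, dv (0,1,0) F p ^ 2) ^ ((1:ℝ)/4) *
          Real.sqrt (∫ p, dv (0,0,1) F p ^ 2) ^ ((1:ℝ)/4) *
          Real.sqrt (∫ p, dv (0,1,0) (dv (0,0,1) F) p ^ 2) ^ ((1:ℝ)/4) *
          Real.sqrt (∫ p, G p ^ 2) ^ ((1:ℝ)/2) *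
          Real.sqrt (∫ p, dv (1,0,0) G p ^ 2) ^ ((1:ℝ)/2) *
          Real.sqrt (∫ p, H p ^ 2) := by
        rw [sqrt_sqrt_mul4 (Real.sqrt_nonneg _) (Real.sqrt_nonneg _) (Real.sqrt_nonneg _)
          (Real.sqrt_nonneg _), sqrt_mul2 (Real.sqrt_nonneg _) (Real.sqrt_nonneg _)]
        ring
end

section
/- There exists a constant C > 0 such that for all smooth compactly supported f, g on ℝ³, the mixed norm ‖f g‖_{L²_{x₃} L¹_{x₁ x₂}} (the L² norm in x₃ of the L¹ norm in (x₁, x₂)) satisfies ‖f g‖_{L²_{x₃} L¹_{x₁ x₂}} ≤ C ‖f‖_{L²(ℝ³)}^{1/2} ‖∂₃f‖_{L²(ℝ³)}^{1/2} ‖g‖_{L²(ℝ³)}. -/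
open MeasureTheory

/-- The mixed norm `L²_{x₃} L¹_{x₁x₂}`: the `L²` norm in `x₃` of the `L¹` norm
of `f` in the horizontal variables `(x₁, x₂)`. -/
noncomputable def mixedL2L1 (f : (Fin 3 → ℝ) → ℝ) : ℝ :=
  (∫ x3 : ℝ, (∫ xh : ℝ × ℝ, |f ![xh.1, xh.2, x3]|) ^ 2) ^ ((1:ℝ)/2)

noncomputable def myEquiv : (Fin 3 → ℝ) ≃ᵐ ℝ × (ℝ × ℝ) :=
  (MeasurableEquiv.piFinSuccAbove (fun _ => ℝ) 2).trans
    ((MeasurableEquiv.refl ℝ).prodCongr (MeasurableEquiv.finTwoArrow))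

lemma myEquiv_symm (p : ℝ × ℝ × ℝ) : myEquiv.symm p = ![p.2.1, p.2.2, p.1] := by
  obtain ⟨c, a, b⟩ := p
  funext i
  fin_cases i <;>
    simp [myEquiv, MeasurableEquiv.piFinSuccAbove, MeasurableEquiv.prodCongr,
      MeasurableEquiv.finTwoArrow, MeasurableEquiv.piFinTwo, MeasurableEquiv.trans,
      MeasurableEquiv.symm, Fin.insertNthEquiv, Fin.insertNth, Fin.succAboveCases,
      MeasurableEquiv.funUnique] <;> rfl

lemma myEquiv_mp : MeasurePreserving myEquiv volume volume := by
  have h1 : MeasurePreserving (MeasurableEquiv.piFinSuccAbove (fun _ : Fin 3 => ℝ) 2)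
      volume volume := volume_preserving_piFinSuccAbove (fun _ : Fin 3 => ℝ) 2
  have h2 : MeasurePreserving
      ((MeasurableEquiv.refl ℝ).prodCongr (MeasurableEquiv.finTwoArrow : (Fin 2 → ℝ) ≃ᵐ ℝ × ℝ))
      volume volume := by
    have := (MeasurePreserving.id (volume : Measure ℝ)).prod (volume_preserving_finTwoArrow ℝ)
    convert this using 1 <;> rfl
  exact h2.comp h1

lemma myEquiv_symm_mp : MeasurePreserving myEquiv.symm volume volume :=
  myEquiv_mp.symm myEquiv

/-- Splitting the integral over ℝ³: off the last coordinate first. -/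
lemma split1_s4 (h : (Fin 3 → ℝ) → ℝ) (hint : Integrable h) :
    ∫ x, h x = ∫ x3 : ℝ, ∫ xh : ℝ × ℝ, h ![xh.1, xh.2, x3] := by
  have h1 : ∫ x, h x = ∫ p : ℝ × ℝ × ℝ, h (myEquiv.symm p) :=
    (myEquiv_symm_mp.integral_comp myEquiv.symm.measurableEmbedding h).symm
  have h2 : Integrable (fun p : ℝ × ℝ × ℝ => h (myEquiv.symm p)) :=
    (myEquiv_symm_mp.integrable_comp_emb myEquiv.symm.measurableEmbedding).2 hint
  simp_rw [myEquiv_symm] at h1 h2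
  rw [h1]; rw [Measure.volume_eq_prod ℝ (ℝ × ℝ)] at h2 ⊢
  exact integral_prod _ h2

/-- Splitting the integral over ℝ³: horizontal variables first. -/
lemma split2_s4 (h : (Fin 3 → ℝ) → ℝ) (hint : Integrable h) :
    ∫ x, h x = ∫ xh : ℝ × ℝ, ∫ x3 : ℝ, h ![xh.1, xh.2, x3] := by
  have h1 : ∫ x, h x = ∫ p : ℝ × ℝ × ℝ, h (myEquiv.symm p) :=
    (myEquiv_symm_mp.integral_comp myEquiv.symm.measurableEmbedding h).symm
  have h2 : Integrable (fun p : ℝ × ℝ × ℝ => h (myEquiv.symm p)) :=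
    (myEquiv_symm_mp.integrable_comp_emb myEquiv.symm.measurableEmbedding).2 hint
  simp_rw [myEquiv_symm] at h1 h2
  rw [h1]; rw [Measure.volume_eq_prod ℝ (ℝ × ℝ)] at h2 ⊢
  exact integral_prod_symm _ h2

lemma integrable_comp (h : (Fin 3 → ℝ) → ℝ) (hint : Integrable h) :
    Integrable (fun p : ℝ × ℝ × ℝ => h ![p.2.1, p.2.2, p.1])
      ((volume : Measure ℝ).prod (volume : Measure (ℝ × ℝ))) := by
  have h2 : Integrable (fun p : ℝ × ℝ × ℝ => h (myEquiv.symm p)) :=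
    (myEquiv_symm_mp.integrable_comp_emb myEquiv.symm.measurableEmbedding).2 hint
  simp_rw [myEquiv_symm] at h2
  rwa [Measure.volume_eq_prod ℝ (ℝ × ℝ)] at h2

section aux
variable {f : (Fin 3 → ℝ) → ℝ}

/-- Horizontal slice: continuity. -/
lemma contH (hf : Continuous f) (x3 : ℝ) :
    Continuous (fun xh : ℝ × ℝ => f ![xh.1, xh.2, x3]) := by
  apply hf.comp
  apply continuous_pi
  intro i
  fin_cases i <;> simp <;> fun_prop

/-- Horizontal slice: compact support. -/
lemma csH (hcf : HasCompactSupport f) (x3 : ℝ) :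
    HasCompactSupport (fun xh : ℝ × ℝ => f ![xh.1, xh.2, x3]) := by
  apply HasCompactSupport.intro (K := (fun x : Fin 3 → ℝ => (x 0, x 1)) '' tsupport f)
  · exact hcf.image (by fun_prop)
  · intro xh hxh
    by_contra h
    apply hxh
    refine ⟨![xh.1, xh.2, x3], subset_tsupport _ h, ?_⟩
    simp

/-- Vertical slice: continuity. -/
lemma contV (hf : Continuous f) (a b : ℝ) :
    Continuous (fun t : ℝ => f ![a, b, t]) := by
  apply hf.comp
  apply continuous_pi
  intro i
  fin_cases i <;> simp <;> fun_prop

lemma csV (hcf : HasCompactSupport f) (a b : ℝ) :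
    HasCompactSupport (fun t : ℝ => f ![a, b, t]) := by
  apply HasCompactSupport.intro (K := (fun x : Fin 3 → ℝ => x 2) '' tsupport f)
  · exact hcf.image (by fun_prop)
  · intro t ht
    by_contra h
    apply ht
    refine ⟨![a, b, t], subset_tsupport _ h, ?_⟩
    simp

lemma contDiffV (hf : ContDiff ℝ (⊤ : ℕ∞) f) (a b : ℝ) :
    ContDiff ℝ (⊤ : ℕ∞) (fun t : ℝ => f ![a, b, t]) := by
  apply hf.comp
  apply contDiff_pi.2
  intro i
  fin_cases i <;> simp <;> exact (by fun_prop)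

lemma hasDerivAtV (hf : ContDiff ℝ (⊤ : ℕ∞) f) (a b t : ℝ) :
    HasDerivAt (fun s : ℝ => f ![a, b, s]) (pd 2 f ![a, b, t]) t := by
  have hvec : (fun s : ℝ => (![a, b, s] : Fin 3 → ℝ))
      = fun s => (![a, b, 0] : Fin 3 → ℝ) + s • (Pi.single 2 1 : Fin 3 → ℝ) := by
    funext s i
    fin_cases i <;> simp [Pi.single]
  have hι : HasDerivAt (fun s : ℝ => (![a, b, s] : Fin 3 → ℝ)) (Pi.single 2 1) t := by
    rw [hvec]
    simpa using ((hasDerivAt_id t).smul_const (Pi.single 2 1 : Fin 3 → ℝ)).const_add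
      (![a, b, 0] : Fin 3 → ℝ)
  exact ((hf.differentiable (by simp) ![a, b, t]).hasFDerivAt).comp_hasDerivAt t hι

lemma cont_pd (hf : ContDiff ℝ (⊤ : ℕ∞) f) : Continuous (pd 2 f) := by
  have h := hf.continuous_fderiv (by simp)
  exact (ContinuousLinearMap.apply ℝ ℝ (Pi.single 2 1 : Fin 3 → ℝ)).continuous.comp h

lemma cs_pd (hcf : HasCompactSupport f) : HasCompactSupport (pd 2 f) := by
  have h := hcf.fderiv (𝕜 := ℝ)
  exact h.comp_left (g := fun L : (Fin 3 → ℝ) →L[ℝ] ℝ => L (Pi.single 2 1)) rfl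

end aux

/-- Cauchy–Schwarz for continuous compactly supported functions. -/
lemma holderCS {X : Type*} [MeasurableSpace X] [TopologicalSpace X] [OpensMeasurableSpace X]
    [T2Space X] {μ : Measure X} [IsFiniteMeasureOnCompacts μ]
    (u v : X → ℝ) (hu : Continuous u) (hcu : HasCompactSupport u)
    (hv : Continuous v) (hcv : HasCompactSupport v) :
    ∫ x, |u x| * |v x| ∂μ ≤
      (∫ x, u x ^ 2 ∂μ) ^ ((1:ℝ)/2) * (∫ x, v x ^ 2 ∂μ) ^ ((1:ℝ)/2) := by
  have hpq : Real.HolderConjugate 2 2 := Real.HolderConjugate.two_two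
  have hmu : MemLp (fun x => |u x|) (ENNReal.ofReal 2) μ := by
    rw [show ENNReal.ofReal 2 = 2 by simp]
    exact (hu.abs).memLp_of_hasCompactSupport (hcu.comp_left (g := abs) abs_zero)
  have hmv : MemLp (fun x => |v x|) (ENNReal.ofReal 2) μ := by
    rw [show ENNReal.ofReal 2 = 2 by simp]
    exact (hv.abs).memLp_of_hasCompactSupport (hcv.comp_left (g := abs) abs_zero)
  have h := integral_mul_le_Lp_mul_Lq_of_nonneg hpq
    (Filter.Eventually.of_forall fun x => abs_nonneg (u x))
    (Filter.Eventually.of_forall fun x => abs_nonneg (v x)) hmu hmv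
  have habs : ∀ w : X → ℝ, ∀ x, |w x| ^ (2:ℝ) = w x ^ 2 := by
    intro w x
    rw [show (2:ℝ) = ((2:ℕ):ℝ) by norm_num, Real.rpow_natCast, sq_abs]
  simp_rw [habs] at h
  convert h using 2 <;> norm_num

lemma trace_ineq {f : (Fin 3 → ℝ) → ℝ} (hf : ContDiff ℝ (⊤ : ℕ∞) f) (hcf : HasCompactSupport f)
    (x3 : ℝ) :
    ∫ xh : ℝ × ℝ, (f ![xh.1, xh.2, x3]) ^ 2 ≤
      ∫ x : Fin 3 → ℝ, |2 * f x * pd 2 f x| := by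
  set D : (Fin 3 → ℝ) → ℝ := fun x => |2 * f x * pd 2 f x| with hD
  have hDcont : Continuous D := by
    apply Continuous.abs
    exact (continuous_const.mul hf.continuous).mul (cont_pd hf)
  have hDcs : HasCompactSupport D := by
    apply HasCompactSupport.abs
    exact ((cs_pd hcf).mul_left)
  have hDint : Integrable D := hDcont.integrable_of_hasCompactSupport hDcs
  have pointwise : ∀ xh : ℝ × ℝ, f ![xh.1, xh.2, x3] ^ 2 ≤ ∫ t : ℝ, D ![xh.1, xh.2, t] := by
    rintro ⟨a, b⟩
    set ψ : ℝ → ℝ := fun t => f ![a, b, t] ^ 2 with hψ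
    have hψder : ∀ t, HasDerivAt ψ (2 * f ![a, b, t] * pd 2 f ![a, b, t]) t := by
      intro t
      have h := (hasDerivAtV hf a b t).pow 2
      simpa [mul_comm, mul_assoc, hψ, Pi.pow_def] using h
    have hderiv_eq : deriv ψ = fun t => 2 * f ![a, b, t] * pd 2 f ![a, b, t] :=
      funext fun t => (hψder t).deriv
    have hψc1 : ContDiff ℝ 1 ψ := ((contDiffV hf a b).pow 2).of_le (by simp)
    have hψcs : HasCompactSupport ψ :=
      (csV hcf a b).comp_left (g := fun y => y ^ 2) (by simp)
    have key : ∫ t in Set.Iic x3, deriv ψ t = ψ x3 :=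
      hψcs.integral_Iic_deriv_eq hψc1 x3
    have hDslice_int : Integrable (fun t : ℝ => D ![a, b, t]) :=
      (contV hDcont a b).integrable_of_hasCompactSupport (csV hDcs a b)
    have hder_int : Integrable (deriv ψ) := by
      rw [hderiv_eq]
      refine Continuous.integrable_of_hasCompactSupport ?_ ?_
      · exact (continuous_const.mul (contV hf.continuous a b)).mul (contV (cont_pd hf) a b)
      · apply HasCompactSupport.intro (K := tsupport (fun t : ℝ => f ![a, b, t]))
        · exact csV hcf a b
        · intro t ht
          have : (fun t : ℝ => f ![a, b, t]) t = 0 := image_eq_zero_of_notMem_tsupport (f := fun t : ℝ => f ![a, b, t]) ht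
          simp only at this
          simp [this]
    calc f ![a, b, x3] ^ 2 = ∫ t in Set.Iic x3, deriv ψ t := key.symm
      _ ≤ ∫ t in Set.Iic x3, D ![a, b, t] := by
          apply setIntegral_mono_on hder_int.integrableOn hDslice_int.integrableOn
            measurableSet_Iic
          intro t _
          rw [hderiv_eq]
          exact le_abs_self _
      _ ≤ ∫ t : ℝ, D ![a, b, t] :=
          setIntegral_le_integral hDslice_int
            (Filter.Eventually.of_forall fun t => abs_nonneg _)
  have hRHSint : Integrable (fun xh : ℝ × ℝ => ∫ t : ℝ, D ![xh.1, xh.2, t]) := by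
    have h := (integrable_comp D hDint).integral_prod_right
    exact h
  calc ∫ xh : ℝ × ℝ, (f ![xh.1, xh.2, x3]) ^ 2
      ≤ ∫ xh : ℝ × ℝ, ∫ t : ℝ, D ![xh.1, xh.2, t] := by
        apply integral_mono_of_nonneg (Filter.Eventually.of_forall fun xh => sq_nonneg _)
          hRHSint (Filter.Eventually.of_forall pointwise)
    _ = ∫ x : Fin 3 → ℝ, D x := (split2_s4 D hDint).symm

lemma sq_rpow_half {x : ℝ} (hx : 0 ≤ x) : (x ^ ((1:ℝ)/2)) ^ 2 = x := by
  rw [← Real.rpow_natCast (x ^ ((1:ℝ)/2)) 2, ← Real.rpow_mul hx]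
  norm_num

/-- Mixed-norm product estimate:
`‖fg‖_{L²_{x₃}L¹_{x₁x₂}} ≤ C ‖f‖_{L²}^{1/2} ‖∂₃f‖_{L²}^{1/2} ‖g‖_{L²}`. -/
theorem mixed_norm_product :
    ∃ C > 0, ∀ f g : (Fin 3 → ℝ) → ℝ,
      ContDiff ℝ (⊤ : ℕ∞) f → HasCompactSupport f →
      ContDiff ℝ (⊤ : ℕ∞) g → HasCompactSupport g →
      mixedL2L1 (fun x => f x * g x) ≤
        C * L2 f ^ ((1:ℝ)/2) * L2 (pd 2 f) ^ ((1:ℝ)/2) * L2 g := by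
  refine ⟨2, two_pos, fun f g hf hcf hg hcg => ?_⟩
  set a := ∫ x : Fin 3 → ℝ, f x ^ 2 with ha'
  set b := ∫ x : Fin 3 → ℝ, (pd 2 f x) ^ 2 with hb'
  set c := ∫ x : Fin 3 → ℝ, g x ^ 2 with hc'
  have ha : 0 ≤ a := integral_nonneg fun x => sq_nonneg _
  have hb : 0 ≤ b := integral_nonneg fun x => sq_nonneg _
  have hc : 0 ≤ c := integral_nonneg fun x => sq_nonneg _
  set M : ℝ := 2 * a ^ ((1:ℝ)/2) * b ^ ((1:ℝ)/2) with hM'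
  have hM : 0 ≤ M := by positivity
  -- trace bound
  have trace' : ∀ x3 : ℝ, ∫ xh : ℝ × ℝ, (f ![xh.1, xh.2, x3]) ^ 2 ≤ M := by
    intro x3
    refine (trace_ineq hf hcf x3).trans ?_
    have h1 : ∀ x : Fin 3 → ℝ, |2 * f x * pd 2 f x| = 2 * (|f x| * |pd 2 f x|) := by
      intro x; rw [abs_mul, abs_mul, abs_two]; ring
    simp_rw [h1]
    rw [integral_const_mul]
    have h2 := holderCS (μ := (volume : Measure (Fin 3 → ℝ))) f (pd 2 f) hf.continuous hcf
      (cont_pd hf) (cs_pd hcf)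
    rw [hM']
    calc 2 * ∫ x : Fin 3 → ℝ, |f x| * |pd 2 f x| ≤ 2 * (a ^ ((1:ℝ)/2) * b ^ ((1:ℝ)/2)) :=
          mul_le_mul_of_nonneg_left h2 (by norm_num)
      _ = 2 * a ^ ((1:ℝ)/2) * b ^ ((1:ℝ)/2) := by ring
  -- slice Cauchy–Schwarz
  have inner : ∀ x3 : ℝ, (∫ xh : ℝ × ℝ, |f ![xh.1, xh.2, x3] * g ![xh.1, xh.2, x3]|) ^ 2 ≤
      M * ∫ xh : ℝ × ℝ, (g ![xh.1, xh.2, x3]) ^ 2 := by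
    intro x3
    have hCS : ∫ xh : ℝ × ℝ, |f ![xh.1, xh.2, x3] * g ![xh.1, xh.2, x3]| ≤
        (∫ xh : ℝ × ℝ, (f ![xh.1, xh.2, x3]) ^ 2) ^ ((1:ℝ)/2) *
        (∫ xh : ℝ × ℝ, (g ![xh.1, xh.2, x3]) ^ 2) ^ ((1:ℝ)/2) := by
      simp_rw [abs_mul]
      exact holderCS _ _ (contH hf.continuous x3) (csH hcf x3)
        (contH hg.continuous x3) (csH hcg x3)
    have hFnn : 0 ≤ ∫ xh : ℝ × ℝ, (f ![xh.1, xh.2, x3]) ^ 2 :=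
      integral_nonneg fun _ => sq_nonneg _
    have hGnn : 0 ≤ ∫ xh : ℝ × ℝ, (g ![xh.1, xh.2, x3]) ^ 2 :=
      integral_nonneg fun _ => sq_nonneg _
    calc (∫ xh : ℝ × ℝ, |f ![xh.1, xh.2, x3] * g ![xh.1, xh.2, x3]|) ^ 2
        ≤ ((∫ xh : ℝ × ℝ, (f ![xh.1, xh.2, x3]) ^ 2) ^ ((1:ℝ)/2) *
          (∫ xh : ℝ × ℝ, (g ![xh.1, xh.2, x3]) ^ 2) ^ ((1:ℝ)/2)) ^ 2 := by
          apply pow_le_pow_left₀ (integral_nonneg fun _ => abs_nonneg _) hCS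
      _ = (∫ xh : ℝ × ℝ, (f ![xh.1, xh.2, x3]) ^ 2) *
          (∫ xh : ℝ × ℝ, (g ![xh.1, xh.2, x3]) ^ 2) := by
          rw [mul_pow, sq_rpow_half hFnn, sq_rpow_half hGnn]
      _ ≤ M * ∫ xh : ℝ × ℝ, (g ![xh.1, xh.2, x3]) ^ 2 :=
          mul_le_mul_of_nonneg_right (trace' x3) hGnn
  -- integrate in x3
  have hg2int : Integrable (fun x : Fin 3 → ℝ => g x ^ 2) :=
    ((hg.continuous.pow 2).integrable_of_hasCompactSupport
      (hcg.comp_left (g := fun y : ℝ => y ^ 2) (by simp) : HasCompactSupport (fun x : Fin 3 → ℝ => g x ^ 2)))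
  have hGint : Integrable (fun x3 : ℝ => ∫ xh : ℝ × ℝ, (g ![xh.1, xh.2, x3]) ^ 2) := by
    have h := (integrable_comp (fun x => g x ^ 2) hg2int).integral_prod_left
    exact h
  have outer : ∫ x3 : ℝ, (∫ xh : ℝ × ℝ, |f ![xh.1, xh.2, x3] * g ![xh.1, xh.2, x3]|) ^ 2 ≤
      M * c := by
    calc ∫ x3 : ℝ, (∫ xh : ℝ × ℝ, |f ![xh.1, xh.2, x3] * g ![xh.1, xh.2, x3]|) ^ 2
        ≤ ∫ x3 : ℝ, M * ∫ xh : ℝ × ℝ, (g ![xh.1, xh.2, x3]) ^ 2 :=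
          integral_mono_of_nonneg (Filter.Eventually.of_forall fun _ => sq_nonneg _)
            (hGint.const_mul M) (Filter.Eventually.of_forall inner)
      _ = M * ∫ x3 : ℝ, ∫ xh : ℝ × ℝ, (g ![xh.1, xh.2, x3]) ^ 2 := integral_const_mul M _
      _ = M * c := by rw [hc', split1_s4 (fun x => g x ^ 2) hg2int]
  -- conclude
  have hLHS : mixedL2L1 (fun x => f x * g x) ≤ (M * c) ^ ((1:ℝ)/2) := by
    rw [mixedL2L1]
    apply Real.rpow_le_rpow (integral_nonneg fun _ => sq_nonneg _) _ (by norm_num)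
    exact outer
  refine hLHS.trans ?_
  have hL2f : L2 f = a ^ ((1:ℝ)/2) := rfl
  have hL2pd : L2 (pd 2 f) = b ^ ((1:ℝ)/2) := rfl
  have hL2g : L2 g = c ^ ((1:ℝ)/2) := rfl
  rw [hL2f, hL2pd, hL2g]
  have key : (M * c) ^ ((1:ℝ)/2) =
      2 ^ ((1:ℝ)/2) * (a ^ ((1:ℝ)/2)) ^ ((1:ℝ)/2) * (b ^ ((1:ℝ)/2)) ^ ((1:ℝ)/2) *
        c ^ ((1:ℝ)/2) := by
    rw [hM']
    rw [Real.mul_rpow hM hc, Real.mul_rpow (by positivity) (by positivity),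
      Real.mul_rpow (by norm_num) (by positivity)]
  rw [key]
  have h2 : (2:ℝ) ^ ((1:ℝ)/2) ≤ 2 := by
    calc (2:ℝ) ^ ((1:ℝ)/2) ≤ (2:ℝ) ^ (1:ℝ) :=
        Real.rpow_le_rpow_of_exponent_le one_le_two (by norm_num)
      _ = 2 := Real.rpow_one 2
  gcongr
end

section
/- Let 0 < s₁ ≤ 1. Then there exists a constant C > 0 such that for all t ≥ 0, ∫₀ᵗ (1 + t − τ)^{−s₁} (1 + τ)^{−1} dτ ≤ C (1 + t)^{−s₁} log(1 + t) whenever t ≥ 1. -/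
/-!
Write `c = 1 + t`, `a = 1 + t - τ`, `b = 1 + τ`. For `0 ≤ s ≤ 1`,
`a ^ (-s) = c ^ (-s) (c / a) ^ s ≤ c ^ (-s) (1 + c / a)`, and `a + b ≥ c` gives
`c / (a b) ≤ 1 / a + 1 / b`. So the integrand is at most `c ^ (-s) (1 / a + 2 / b)`, and both
`1 / a` and `1 / b` integrate to `log (1 + t)` over `[0, t]`.
-/

open Real intervalIntegral

lemma rpow_le_one_add_self {x s : ℝ} (hx : 0 ≤ x) (hs₀ : 0 ≤ s) (hs₁ : s ≤ 1) :
    x ^ s ≤ 1 + x := by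
  rcases le_total x 1 with hx1 | hx1
  · linarith [rpow_le_one hx hx1 hs₀]
  · linarith [rpow_le_self_of_one_le hx1 hs₁]

lemma rpow_neg_mul_inv_le {a b c s : ℝ} (ha : 0 < a) (hb : 0 < b) (hc : 0 < c)
    (hcab : c ≤ a + b) (hs₀ : 0 ≤ s) (hs₁ : s ≤ 1) :
    a ^ (-s) * b⁻¹ ≤ c ^ (-s) * (a⁻¹ + 2 * b⁻¹) := by
  have hsplit : a ^ (-s) = c ^ (-s) * (c / a) ^ s := by
    rw [div_rpow hc.le ha.le, rpow_neg ha.le, rpow_neg hc.le]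
    field_simp [(rpow_pos_of_pos hc s).ne']
  have hcross : c / a * b⁻¹ ≤ a⁻¹ + b⁻¹ := by
    rw [div_mul_eq_mul_div, div_le_iff₀ ha]
    field_simp
    linarith
  rw [hsplit, mul_assoc]
  gcongr
  calc (c / a) ^ s * b⁻¹ ≤ (1 + c / a) * b⁻¹ := by
        gcongr; exact rpow_le_one_add_self (by positivity) hs₀ hs₁
    _ ≤ a⁻¹ + 2 * b⁻¹ := by linarith

lemma integral_inv_one_add {t : ℝ} (ht : -1 < t) :
    ∫ τ in (0 : ℝ)..t, (1 + τ)⁻¹ = log (1 + t) := by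
  rw [integral_comp_add_left (fun x => x⁻¹), add_zero,
    integral_inv_of_pos one_pos (by linarith), div_one]

lemma integral_inv_one_add_sub {t : ℝ} (ht : -1 < t) :
    ∫ τ in (0 : ℝ)..t, (1 + t - τ)⁻¹ = log (1 + t) := by
  simp only [add_sub_assoc]
  rw [integral_comp_sub_left (fun x => (1 + x)⁻¹) t, sub_self, sub_zero,
    integral_inv_one_add ht]

/-- Convolution-type decay estimate, borderline case `s₂ = 1`:
`∫₀ᵗ (1+t−τ)^{−s₁}(1+τ)^{−1} dτ ≤ C (1+t)^{−s₁} log(1+t)` for `t ≥ 1`. -/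
theorem convolution_decay_s2_eq_one (s₁ : ℝ) (h1 : 0 < s₁) (h2 : s₁ ≤ 1) :
    ∃ C > 0, ∀ t : ℝ, 1 ≤ t →
      (∫ τ in (0:ℝ)..t, (1 + t - τ) ^ (-s₁) * (1 + τ) ^ (-(1:ℝ))) ≤
        C * (1 + t) ^ (-s₁) * Real.log (1 + t) := by
  refine ⟨3, by norm_num, fun t ht => ?_⟩
  have ht₀ : 0 ≤ t := by linarith
  have hpos : ∀ τ ∈ Set.uIcc 0 t, 0 < 1 + t - τ ∧ 0 < 1 + τ := fun τ hτ => by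
    rw [Set.uIcc_of_le ht₀] at hτ
    constructor <;> linarith [hτ.1, hτ.2]
  have hint₁ : IntervalIntegrable (fun τ => (1 + t - τ)⁻¹) MeasureTheory.volume 0 t :=
    intervalIntegrable_inv (fun τ hτ => (hpos τ hτ).1.ne') (by fun_prop)
  have hint₂ : IntervalIntegrable (fun τ => (1 + τ)⁻¹) MeasureTheory.volume 0 t :=
    intervalIntegrable_inv (fun τ hτ => (hpos τ hτ).2.ne') (by fun_prop)
  have hint :
      IntervalIntegrable (fun τ => (1 + t - τ) ^ (-s₁) * (1 + τ)⁻¹) MeasureTheory.volume 0 t :=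
    hint₂.continuousOn_mul <|
      (continuousOn_const.sub continuousOn_id).rpow_const fun τ hτ => .inl (hpos τ hτ).1.ne'
  simp only [rpow_neg_one]
  calc ∫ τ in (0 : ℝ)..t, (1 + t - τ) ^ (-s₁) * (1 + τ)⁻¹
      ≤ ∫ τ in (0 : ℝ)..t, (1 + t) ^ (-s₁) * ((1 + t - τ)⁻¹ + 2 * (1 + τ)⁻¹) :=
        integral_mono_on ht₀ hint ((hint₁.add (hint₂.const_mul 2)).const_mul _) fun τ hτ =>
          have hτ' := hpos τ (Set.Icc_subset_uIcc hτ)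
          rpow_neg_mul_inv_le hτ'.1 hτ'.2 (by linarith) (by linarith) h1.le h2
    _ = 3 * (1 + t) ^ (-s₁) * log (1 + t) := by
        rw [integral_const_mul, integral_add hint₁ (hint₂.const_mul 2), integral_const_mul,
          integral_inv_one_add_sub (by linarith), integral_inv_one_add (by linarith)]
        ring
end
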